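/- arXiv:2104.12153 — 8 statements merged into one kernel-verified Lean document; each statement's English description precedes it below -/
import Mathlib

section
/- Let E be a normal partially ordered vector space, let (x_λ) be a decreasing net in E, and let x ∈ E. Then x_λ ↓ x (i.e., x is the infimum of the net) if and only if ⟨x, x′⟩ = inf_λ ⟨x_λ, x′⟩ for every positive order continuous functional x′ on E. -/
/-- A positive, order continuous linear functional: it maps decreasing nets
(equivalently, nonempty downward directed sets) with infimum `0` to nets with
infimum `0`. -/
def IsPosOrderContFunctional {E : Type*} [AddCommGroup E] [PartialOrder E] [IsOrderedAddMonoid E] [Module ℝ E]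
    (φ : E →ₗ[ℝ] ℝ) : Prop :=
  (∀ x : E, 0 ≤ x → 0 ≤ φ x) ∧
  ∀ S : Set E, S.Nonempty → DirectedOn (· ≥ ·) S → IsGLB S 0 → IsGLB (φ '' S) 0

/-- `E` is normal: positivity is detected by the positive order continuous functionals. -/
def IsNormalPOVS (E : Type*) [AddCommGroup E] [PartialOrder E] [IsOrderedAddMonoid E] [Module ℝ E] : Prop :=
  ∀ x : E, (∀ φ : E →ₗ[ℝ] ℝ, IsPosOrderContFunctional φ → 0 ≤ φ x) ↔ 0 ≤ x

/-!
Translating by `x` reduces the forward direction to order continuity at `0`: if `x_λ ↓ x`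
then `x_λ - x ↓ 0`, hence `⟨x_λ, x′⟩ - ⟨x, x′⟩ ↓ 0`. For the converse, normality says that
the positive order continuous functionals jointly reflect the order of `E`; since they are
monotone, both halves of `IsGLB` pull back from their values to `E`.
-/

open Set

section

variable {E : Type*} [AddCommGroup E] [PartialOrder E] [IsOrderedAddMonoid E] [Module ℝ E]

namespace IsPosOrderContFunctional

variable {φ : E →ₗ[ℝ] ℝ}

theorem monotone (hφ : IsPosOrderContFunctional φ) : Monotone φ := fun a b hab => by
  simpa [map_sub] using hφ.1 (b - a) (sub_nonneg.mpr hab)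

theorem isGLB_image (hφ : IsPosOrderContFunctional φ) {S : Set E} {a : E} (hne : S.Nonempty)
    (hdir : DirectedOn (· ≥ ·) S) (ha : IsGLB S a) : IsGLB (φ '' S) (φ a) := by
  have htrans : IsGLB ((OrderIso.subRight a) '' S) 0 := by
    simpa using (OrderIso.subRight a).isGLB_image'.mpr ha
  have hdir' : DirectedOn (· ≥ ·) ((OrderIso.subRight a) '' S) :=
    hdir.mono_comp fun _ _ h => (OrderIso.subRight a).monotone h
  have himage := hφ.2 _ (hne.image _) hdir' htrans
  rw [image_image] at himage
  simp only [OrderIso.subRight_apply, map_sub] at himage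
  rw [← (OrderIso.subRight (φ a)).isGLB_image', image_image]
  simpa using himage

end IsPosOrderContFunctional

theorem IsNormalPOVS.le_of_forall_le (hE : IsNormalPOVS E) {a b : E}
    (h : ∀ φ : E →ₗ[ℝ] ℝ, IsPosOrderContFunctional φ → φ a ≤ φ b) : a ≤ b := by
  rw [← sub_nonneg, ← hE]
  intro φ hφ
  simpa [map_sub] using h φ hφ

theorem IsNormalPOVS.isGLB_of_forall_isGLB_image (hE : IsNormalPOVS E) {S : Set E} {a : E}
    (h : ∀ φ : E →ₗ[ℝ] ℝ, IsPosOrderContFunctional φ → IsGLB (φ '' S) (φ a)) : IsGLB S a :=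
  ⟨fun _ hs => hE.le_of_forall_le fun φ hφ => (h φ hφ).1 (mem_image_of_mem φ hs),
    fun _ hy => hE.le_of_forall_le fun φ hφ => (h φ hφ).2 (hφ.monotone.mem_lowerBounds_image hy)⟩

end

/-- Let `E` be a normal partially ordered vector space, `(x_λ)` a decreasing net in `E`
and `x ∈ E`. Then `x_λ ↓ x` if and only if `⟨x, x′⟩ = inf_λ ⟨x_λ, x′⟩` for every
positive order continuous functional `x′` on `E`. -/
theorem decreasing_net_inf_iff_inf_via_functionals {E : Type*} [AddCommGroup E] [PartialOrder E] [IsOrderedAddMonoid E]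
    [Module ℝ E] (hnormal : IsNormalPOVS E)
    {ι : Type*} [Preorder ι] [Nonempty ι] (hι : ∀ a b : ι, ∃ c, a ≤ c ∧ b ≤ c)
    (xl : ι → E) (hdec : Antitone xl) (x : E) :
    IsGLB (Set.range xl) x ↔
      ∀ φ : E →ₗ[ℝ] ℝ, IsPosOrderContFunctional φ →
        IsGLB (φ '' Set.range xl) (φ x) := by
  have : IsDirectedOrder ι := ⟨hι⟩
  exact ⟨fun hx φ hφ => hφ.isGLB_image (range_nonempty xl) hdec.directed_ge.directedOn_range hx,
    hnormal.isGLB_of_forall_isGLB_image⟩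
end

section
/- Let X be a locally compact Hausdorff space, E a monotone complete and normal partially ordered vector space, and μ a positive Ē-valued Borel measure on X such that for every relatively compact open subset U the restriction of μ to the Borel sets of U is a regular Borel measure on U. If μ is weakly inner regular at a Borel set Δ, then μ is inner regular at Δ. -/
/-- `E` is monotone complete. -/
def MonotoneComplete (E : Type*) [Preorder E] : Prop :=
  ∀ S : Set E, S.Nonempty → DirectedOn (· ≤ ·) S → BddAbove S → ∃ y, IsLUB S y

section Measures

variable {X : Type*} [TopologicalSpace X] [MeasurableSpace X] [BorelSpace X]
variable {E : Type*} [AddCommGroup E] [PartialOrder E] [IsOrderedAddMonoid E]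

/-- A positive `WithTop E`-valued measure on the Borel σ-algebra of `X`. -/
def IsPosMeasure (μ : Set X → WithTop E) : Prop :=
  μ ∅ = 0 ∧ (∀ Δ : Set X, MeasurableSet Δ → 0 ≤ μ Δ) ∧
  ∀ Δ : ℕ → Set X, (∀ n, MeasurableSet (Δ n)) → Pairwise (Function.onFun Disjoint Δ) →
    IsLUB {y : WithTop E | ∃ N : ℕ, y = ∑ n ∈ Finset.range N, μ (Δ n)} (μ (⋃ n, Δ n))

def InnerRegularAt (μ : Set X → WithTop E) (Δ : Set X) : Prop :=
  IsLUB {y : WithTop E | ∃ K : Set X, IsCompact K ∧ K ⊆ Δ ∧ y = μ K} (μ Δ)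

def WeaklyInnerRegularAt (μ : Set X → WithTop E) (Δ : Set X) : Prop :=
  IsLUB {y : WithTop E | ∃ K : Set X, IsCompact K ∧ y = μ (Δ ∩ K)} (μ Δ)

/-- Outer regularity at `Δ` relative to an open set `U` (identifying the Borel sets of
the subspace `U` with the Borel sets of `X` contained in `U`): `μ Δ` is the infimum of
`μ V` over sets `V ⊆ U` open (in `U`, equivalently in `X`) containing `Δ`. -/
def RelOuterRegularAt (μ : Set X → WithTop E) (U Δ : Set X) : Prop :=
  IsGLB {y : WithTop E | ∃ V : Set X, IsOpen V ∧ V ⊆ U ∧ Δ ⊆ V ∧ y = μ V} (μ Δ)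

/-- The restriction of `μ` to the Borel σ-algebra of the open subspace `U` is a regular
Borel measure on `U`: finite on compact subsets of `U`, inner regular at sets open in
`U`, and outer regular (relative to `U`) at all Borel subsets of `U`. -/
def RestrictionRegularBorel (μ : Set X → WithTop E) (U : Set X) : Prop :=
  (∀ K : Set X, IsCompact K → K ⊆ U → μ K ≠ ⊤) ∧
  (∀ V : Set X, IsOpen V → V ⊆ U → InnerRegularAt μ V) ∧
  (∀ Δ : Set X, MeasurableSet Δ → Δ ⊆ U → RelOuterRegularAt μ U Δ)

end Measures

/-!
Let `b` bound `μ L` for all compact `L ⊆ Δ`, and let `K` be compact. Put `K` inside a relatively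
compact open `U`. For every open `V` with `K \ Δ ⊆ V ⊆ U`, the set `K \ V` is a compact subset
of `Δ`, so `μ K ≤ μ V + b`. Outer regularity of `μ` at `K \ Δ` inside `U` gives
`μ (K \ Δ) + μ (Δ ∩ K) = μ K ≤ μ (K \ Δ) + b`, and since `μ K` is finite we may cancel
`μ (K \ Δ)`, getting `μ (Δ ∩ K) ≤ b`. Weak inner regularity then bounds `μ Δ` by `b`.
-/

section PositiveMeasure

variable {X : Type*} [MeasurableSpace X]
variable {E : Type*} [AddCommGroup E] [PartialOrder E] [IsOrderedAddMonoid E]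

theorem IsPosMeasure.union {μ : Set X → WithTop E} (hμ : IsPosMeasure μ)
    {A B : Set X} (hA : MeasurableSet A) (hB : MeasurableSet B) (hAB : Disjoint A B) :
    μ (A ∪ B) = μ A + μ B := by
  obtain ⟨h_empty, h_nonneg, h_sum⟩ := hμ
  let s : ℕ → Set X := fun n => if n = 0 then A else if n = 1 then B else ∅
  have hs_meas : ∀ n, MeasurableSet (s n) := by
    intro n
    simp only [s]
    split_ifs <;> simp [hA, hB]
  have hs_disj : Pairwise (Function.onFun Disjoint s) := by
    intro i j hij
    simp only [Function.onFun, s]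
    split_ifs <;> simp_all [hAB.symm]
  have hs_iUnion : ⋃ n, s n = A ∪ B := by
    ext x
    simp only [Set.mem_iUnion, Set.mem_union, s]
    constructor
    · rintro ⟨n, hn⟩
      split_ifs at hn <;> simp_all
    · rintro (hx | hx)
      exacts [⟨0, by simpa using hx⟩, ⟨1, by simpa using hx⟩]
  have h_partial : ∀ N, ∑ n ∈ Finset.range N, μ (s n) ≤ μ A + μ B := by
    intro N
    calc ∑ n ∈ Finset.range N, μ (s n) ≤ ∑ n ∈ Finset.range (N + 2), μ (s n) :=
          Finset.sum_le_sum_of_subset_of_nonneg (by simp) fun n _ _ => h_nonneg _ (hs_meas n)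
      _ = ∑ n ∈ Finset.range 2, μ (s n) := by
          refine (Finset.sum_subset (by simp) fun n _ hn => ?_).symm
          simp only [Finset.mem_range, not_lt] at hn
          simp [s, show n ≠ 0 by omega, show n ≠ 1 by omega, h_empty]
      _ = μ A + μ B := by simp [Finset.sum_range_succ, s]
  have h_greatest : IsGreatest {y | ∃ N : ℕ, y = ∑ n ∈ Finset.range N, μ (s n)} (μ A + μ B) :=
    ⟨⟨2, by simp [Finset.sum_range_succ, s]⟩, by rintro _ ⟨N, rfl⟩; exact h_partial N⟩
  rw [← hs_iUnion]
  exact (h_sum s hs_meas hs_disj).unique h_greatest.isLUB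

theorem IsPosMeasure.inter_add_diff {μ : Set X → WithTop E} (hμ : IsPosMeasure μ)
    {A B : Set X} (hA : MeasurableSet A) (hB : MeasurableSet B) :
    μ (A ∩ B) + μ (A \ B) = μ A := by
  rw [← hμ.union (hA.inter hB) (hA.diff hB) disjoint_inf_sdiff, Set.inter_union_sdiff]

theorem IsPosMeasure.mono {μ : Set X → WithTop E} (hμ : IsPosMeasure μ)
    {A B : Set X} (hA : MeasurableSet A) (hB : MeasurableSet B) (hAB : A ⊆ B) :
    μ A ≤ μ B := by
  rw [← hμ.inter_add_diff hB hA, Set.inter_eq_self_of_subset_right hAB]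
  exact le_add_of_nonneg_right (hμ.2.1 _ (hB.diff hA))

end PositiveMeasure

theorem WithTop.le_of_isGLB_of_forall_add_le {E : Type*} [AddCommGroup E] [PartialOrder E]
    [IsOrderedAddMonoid E] {S : Set (WithTop E)} {a m b : WithTop E} (hS : IsGLB S a)
    (ha : a ≠ ⊤) (hm : m ≠ ⊤) (h : ∀ v ∈ S, a + m ≤ v + b) : m ≤ b := by
  lift a to E using ha
  lift m to E using hm
  induction b using WithTop.recTopCoe with
  | top => exact le_top
  | coe b =>
    have h_lower : ((a + m - b : E) : WithTop E) ∈ lowerBounds S := by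
      intro v hv
      induction v using WithTop.recTopCoe with
      | top => exact le_top
      | coe v =>
        have := h v hv
        norm_cast at this ⊢
        exact sub_le_iff_le_add.mpr this
    have := hS.2 h_lower
    norm_cast at this ⊢
    simpa [sub_le_iff_le_add, add_comm b] using this

section InnerRegularity

variable {X : Type*} [TopologicalSpace X] [MeasurableSpace X] [BorelSpace X] [T2Space X]
variable {E : Type*} [AddCommGroup E] [PartialOrder E] [IsOrderedAddMonoid E]

theorem IsPosMeasure.le_add_of_compact_subset_le {μ : Set X → WithTop E} (hμ : IsPosMeasure μ)
    {Δ K V : Set X} {b : WithTop E}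
    (hb : b ∈ upperBounds {y | ∃ L : Set X, IsCompact L ∧ L ⊆ Δ ∧ y = μ L})
    (hK : IsCompact K) (hV : IsOpen V) (hKV : K \ Δ ⊆ V) :
    μ K ≤ μ V + b := by
  have hK_meas := hK.isClosed.measurableSet
  have h_rest : μ (K \ V) ≤ b :=
    hb ⟨K \ V, hK.diff hV, fun x hx => by_contra fun hxΔ => hx.2 (hKV ⟨hx.1, hxΔ⟩), rfl⟩
  calc μ K = μ (K ∩ V) + μ (K \ V) := (hμ.inter_add_diff hK_meas hV.measurableSet).symm
    _ ≤ μ V + b := add_le_add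
        (hμ.mono (hK_meas.inter hV.measurableSet) hV.measurableSet Set.inter_subset_right) h_rest

theorem IsPosMeasure.inter_compact_le_of_relOuterRegularAt {μ : Set X → WithTop E}
    (hμ : IsPosMeasure μ) {Δ K U : Set X} {b : WithTop E} (hΔ : MeasurableSet Δ)
    (hb : b ∈ upperBounds {y | ∃ L : Set X, IsCompact L ∧ L ⊆ Δ ∧ y = μ L})
    (hK : IsCompact K) (hK_fin : μ K ≠ ⊤) (h_outer : RelOuterRegularAt μ U (K \ Δ)) :
    μ (Δ ∩ K) ≤ b := by
  have h_split : μ (K \ Δ) + μ (Δ ∩ K) = μ K := by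
    rw [add_comm, Set.inter_comm]
    exact hμ.inter_add_diff hK.isClosed.measurableSet hΔ
  rw [← h_split, WithTop.add_ne_top] at hK_fin
  refine WithTop.le_of_isGLB_of_forall_add_le h_outer hK_fin.1 hK_fin.2 ?_
  rintro _ ⟨V, hV, -, hKV, rfl⟩
  rw [h_split]
  exact hμ.le_add_of_compact_subset_le hb hK hV hKV

end InnerRegularity

theorem weaklyInnerRegular_innerRegular_general
    {X : Type*} [TopologicalSpace X] [MeasurableSpace X] [BorelSpace X]
    [LocallyCompactSpace X] [T2Space X]
    {E : Type*} [AddCommGroup E] [PartialOrder E] [IsOrderedAddMonoid E]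
    (μ : Set X → WithTop E) (hμ : IsPosMeasure μ)
    (hrestr : ∀ U : Set X, IsOpen U → IsCompact (closure U) → RestrictionRegularBorel μ U)
    (Δ : Set X) (hΔ : MeasurableSet Δ) (hw : WeaklyInnerRegularAt μ Δ) :
    InnerRegularAt μ Δ := by
  refine ⟨?_, fun b hb => hw.2 ?_⟩
  · rintro _ ⟨K, hK, hKΔ, rfl⟩
    exact hw.1 ⟨K, hK, by rw [Set.inter_eq_self_of_subset_right hKΔ]⟩
  · rintro _ ⟨K, hK, rfl⟩
    obtain ⟨U, hU, hKU, hU_closure⟩ := exists_isOpen_superset_and_isCompact_closure hK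
    obtain ⟨h_fin, -, h_outer⟩ := hrestr U hU hU_closure
    exact hμ.inter_compact_le_of_relOuterRegularAt hΔ hb hK (h_fin K hK hKU)
      (h_outer _ (hK.isClosed.measurableSet.diff hΔ) (Set.sdiff_subset.trans hKU))

/-- Let `X` be a locally compact Hausdorff space, `E` a monotone complete and normal
partially ordered vector space, and `μ` a positive `WithTop E`-valued Borel measure on
`X` whose restriction to every relatively compact open subset `U` is a regular Borel
measure on `U`. If `μ` is weakly inner regular at a Borel set `Δ`, then `μ` is inner
regular at `Δ`. -/
theorem weaklyInnerRegular_innerRegular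
    {X : Type*} [TopologicalSpace X] [MeasurableSpace X] [BorelSpace X]
    [LocallyCompactSpace X] [T2Space X]
    {E : Type*} [AddCommGroup E] [PartialOrder E] [IsOrderedAddMonoid E] [Module ℝ E]
    (hmc : MonotoneComplete E) (hnormal : IsNormalPOVS E)
    (μ : Set X → WithTop E) (hμ : IsPosMeasure μ)
    (hrestr : ∀ U : Set X, IsOpen U → IsCompact (closure U) → RestrictionRegularBorel μ U)
    (Δ : Set X) (hΔ : MeasurableSet Δ) (hw : WeaklyInnerRegularAt μ Δ) :
    InnerRegularAt μ Δ :=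
  weaklyInnerRegular_innerRegular_general μ hμ hrestr Δ hΔ hw
end

section
/- Let X be a locally compact Hausdorff space, E a monotone complete and normal partially ordered vector space, and μ a finite E-valued Borel measure on X such that its restriction to each relatively compact open subset is a regular Borel measure, and which is weakly inner regular at all Borel sets. Then μ is both inner regular and outer regular at all Borel sets. -/
section Measures

variable {X : Type*} [TopologicalSpace X] [MeasurableSpace X] [BorelSpace X]
variable {E : Type*} [AddCommGroup E] [PartialOrder E] [IsOrderedAddMonoid E]

def OuterRegularAt (μ : Set X → WithTop E) (Δ : Set X) : Prop :=
  IsGLB {y : WithTop E | ∃ V : Set X, IsOpen V ∧ Δ ⊆ V ∧ y = μ V} (μ Δ)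

end Measures

theorem WithTop.add_coe_add_coe_of_add_eq_zero {E : Type*} [AddMonoid E] {c d : E} (h : c + d = 0)
    (x : WithTop E) : x + c + d = x := by
  rw [add_assoc, ← WithTop.coe_add, h, WithTop.coe_zero, add_zero]

theorem IsLUB.withTop_add_le {E : Type*} [AddCommGroup E] [PartialOrder E] [IsOrderedAddMonoid E]
    {S : Set (WithTop E)} {t b u : WithTop E} (hS : IsLUB S t) (hb : b ≠ ⊤)
    (h : ∀ s ∈ S, s + b ≤ u) : t + b ≤ u := by
  lift b to E using hb
  have hub : u + ((-b : E) : WithTop E) ∈ upperBounds S := fun s hs => by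
    simpa only [WithTop.add_coe_add_coe_of_add_eq_zero (add_neg_cancel b)] using
      add_le_add_left (h s hs) ((-b : E) : WithTop E)
  simpa only [WithTop.add_coe_add_coe_of_add_eq_zero (neg_add_cancel b)] using
    add_le_add_left (hS.2 hub) (b : WithTop E)

theorem IsGLB.withTop_le_add {E : Type*} [AddCommGroup E] [PartialOrder E] [IsOrderedAddMonoid E]
    {S : Set (WithTop E)} {d b u : WithTop E} (hS : IsGLB S d) (hb : b ≠ ⊤)
    (h : ∀ s ∈ S, u ≤ b + s) : u ≤ b + d := by
  lift b to E using hb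
  have hlb : u + ((-b : E) : WithTop E) ∈ lowerBounds S := fun s hs => by
    simpa only [add_comm (b : WithTop E),
      WithTop.add_coe_add_coe_of_add_eq_zero (add_neg_cancel b)] using
      add_le_add_left (h s hs) ((-b : E) : WithTop E)
  simpa only [WithTop.add_coe_add_coe_of_add_eq_zero (neg_add_cancel b), add_comm _ d] using
    add_le_add_left (hS.2 hlb) (b : WithTop E)

namespace IsPosMeasure

variable {X : Type*} [MeasurableSpace X]
variable {E : Type*} [AddCommGroup E] [PartialOrder E] [IsOrderedAddMonoid E]
variable {μ : Set X → WithTop E} {A B : Set X}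

theorem union_eq_add (hμ : IsPosMeasure μ) (hA : MeasurableSet A) (hB : MeasurableSet B)
    (hAB : Disjoint A B) : μ (A ∪ B) = μ A + μ B := by
  let Δ : ℕ → Set X := fun | 0 => A | 1 => B | _ => ∅
  have hmeas : ∀ n, MeasurableSet (Δ n) := by
    rintro (_ | _ | n)
    exacts [hA, hB, MeasurableSet.empty]
  have hdisj : Pairwise (Function.onFun Disjoint Δ) := by
    rintro (_ | _ | i) (_ | _ | j) hij <;> simp_all [Function.onFun, Δ, hAB.symm]
  have hunion : ⋃ n, Δ n = A ∪ B := by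
    rw [← Set.union_iUnion_nat_succ, ← Set.union_iUnion_nat_succ]
    simp [Δ]
  have hsum : ∀ N, ∑ n ∈ Finset.range (N + 2), μ (Δ n) = μ A + μ B := fun N => by
    rw [Finset.sum_range_succ', Finset.sum_range_succ']
    simp [Δ, hμ.1, add_comm]
  have hgreatest : IsGreatest {y | ∃ N : ℕ, y = ∑ n ∈ Finset.range N, μ (Δ n)} (μ A + μ B) := by
    refine ⟨⟨2, (hsum 0).symm⟩, ?_⟩
    rintro _ ⟨N, rfl⟩
    rw [← hsum N]
    exact Finset.sum_le_sum_of_subset_of_nonneg (Finset.range_mono (by omega))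
      fun n _ _ => hμ.2.1 _ (hmeas n)
  rw [← hunion]
  exact (hμ.2.2 Δ hmeas hdisj).unique hgreatest.isLUB

theorem inter_add_diff_s6 (hμ : IsPosMeasure μ) (hA : MeasurableSet A) (hB : MeasurableSet B) :
    μ (A ∩ B) + μ (A \ B) = μ A := by
  rw [← hμ.union_eq_add (hA.inter hB) (hA.diff hB) Set.disjoint_sdiff_inter.symm,
    Set.inter_union_sdiff]

theorem mono_s6 (hμ : IsPosMeasure μ) (hA : MeasurableSet A) (hB : MeasurableSet B) (hAB : A ⊆ B) :
    μ A ≤ μ B := by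
  rw [← hμ.inter_add_diff_s6 hB hA, Set.inter_eq_right.mpr hAB]
  exact le_add_of_nonneg_right (hμ.2.1 _ (hB.diff hA))

theorem ne_top (hμ : IsPosMeasure μ) (hfin : μ Set.univ ≠ ⊤) (hA : MeasurableSet A) :
    μ A ≠ ⊤ := fun hT => hfin <| by
  rw [← hμ.inter_add_diff_s6 MeasurableSet.univ hA, Set.univ_inter, hT, WithTop.top_add]

end IsPosMeasure

section Regularity

variable {X : Type*} [TopologicalSpace X] [MeasurableSpace X] [OpensMeasurableSpace X]
variable {E : Type*} [AddCommGroup E] [PartialOrder E] [IsOrderedAddMonoid E]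
variable {μ : Set X → WithTop E}

theorem innerRegularAt_of_subset_isCompact [T2Space X] (hμ : IsPosMeasure μ)
    (hfin : μ Set.univ ≠ ⊤) {U K A : Set X} (hU : IsOpen U) (hK : IsCompact K) (hKU : K ⊆ U)
    (hA : MeasurableSet A) (hAK : A ⊆ K) (hout : RelOuterRegularAt μ U (U \ A)) :
    InnerRegularAt μ A := by
  refine ⟨fun _ ⟨C, hC, hCA, hy⟩ => hy ▸ hμ.mono_s6 hC.measurableSet hA hCA, fun b hb => ?_⟩
  rcases eq_or_ne b ⊤ with rfl | hb_top
  · exact le_top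
  have hUA : MeasurableSet (U \ A) := hU.measurableSet.diff hA
  suffices μ A + μ (U \ A) ≤ b + μ (U \ A) from
    (WithTop.add_le_add_iff_right (hμ.ne_top hfin hUA)).mp this
  refine hout.withTop_le_add hb_top ?_
  rintro _ ⟨V, hV, hVU, hUAV, rfl⟩
  have hAV : A \ V = K \ V := Set.Subset.antisymm (Set.sdiff_subset_sdiff_left hAK)
    fun x hx => ⟨by_contra fun hxA => hx.2 (hUAV ⟨hKU hx.1, hxA⟩), hx.2⟩
  have hVA : V \ A = U \ A := Set.Subset.antisymm (Set.sdiff_subset_sdiff_left hVU)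
    fun x hx => ⟨hUAV hx, hx.2⟩
  calc μ A + μ (U \ A) = μ (A ∩ V) + μ (K \ V) + μ (U \ A) := by
        rw [← hAV, hμ.inter_add_diff_s6 hA hV.measurableSet]
    _ ≤ μ (A ∩ V) + b + μ (U \ A) := by
        gcongr
        exact hb ⟨K \ V, hK.diff hV, hAV ▸ Set.sdiff_subset, rfl⟩
    _ = b + μ V := by
        rw [← hVA, Set.inter_comm, ← hμ.inter_add_diff_s6 hV.measurableSet hA]
        ac_rfl

theorem innerRegularAt_inter_isCompact [LocallyCompactSpace X] [T2Space X]
    (hμ : IsPosMeasure μ) (hfin : μ Set.univ ≠ ⊤)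
    (hrestr : ∀ U : Set X, IsOpen U → IsCompact (closure U) → RestrictionRegularBorel μ U)
    {Δ K : Set X} (hΔ : MeasurableSet Δ) (hK : IsCompact K) : InnerRegularAt μ (Δ ∩ K) := by
  obtain ⟨L, hL, hKL⟩ := exists_compact_superset hK
  have hclosure : IsCompact (closure (interior L)) :=
    hL.of_isClosed_subset isClosed_closure (closure_minimal interior_subset hL.isClosed)
  have hΔK : MeasurableSet (Δ ∩ K) := hΔ.inter hK.measurableSet
  exact innerRegularAt_of_subset_isCompact hμ hfin isOpen_interior hK hKL hΔK
    Set.inter_subset_right ((hrestr _ isOpen_interior hclosure).2.2 _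
      (isOpen_interior.measurableSet.diff hΔK) Set.sdiff_subset)

theorem innerRegularAt_of_weaklyInnerRegularAt [T2Space X] (hμ : IsPosMeasure μ) {Δ : Set X}
    (hΔ : MeasurableSet Δ) (hw : WeaklyInnerRegularAt μ Δ)
    (h : ∀ K : Set X, IsCompact K → InnerRegularAt μ (Δ ∩ K)) : InnerRegularAt μ Δ := by
  refine ⟨fun _ ⟨C, hC, hCΔ, hy⟩ => hy ▸ hμ.mono_s6 hC.measurableSet hΔ hCΔ, fun b hb => ?_⟩
  refine hw.2 fun _ ⟨K, hK, hy⟩ => hy ▸ (h K hK).2 fun _ ⟨C, hC, hCΔK, hz⟩ => ?_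
  exact hb ⟨C, hC, hCΔK.trans Set.inter_subset_left, hz⟩

theorem outerRegularAt_of_innerRegularAt_compl [T2Space X] (hμ : IsPosMeasure μ)
    (hfin : μ Set.univ ≠ ⊤) {Δ : Set X} (hΔ : MeasurableSet Δ) (h : InnerRegularAt μ Δᶜ) :
    OuterRegularAt μ Δ := by
  refine ⟨fun _ ⟨V, hV, hΔV, hy⟩ => hy ▸ hμ.mono_s6 hΔ hV.measurableSet hΔV, fun b hb => ?_⟩
  have hb_top : b ≠ ⊤ :=
    ne_top_of_le_ne_top hfin (hb ⟨Set.univ, isOpen_univ, Set.subset_univ Δ, rfl⟩)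
  have hsplit : ∀ {A : Set X}, MeasurableSet A → μ A + μ Aᶜ = μ Set.univ := fun hA => by
    rw [← hμ.inter_add_diff_s6 MeasurableSet.univ hA, Set.univ_inter, Set.compl_eq_univ_sdiff]
  suffices μ Δᶜ + b ≤ μ Δᶜ + μ Δ from
    (WithTop.add_le_add_iff_left (hμ.ne_top hfin hΔ.compl)).mp this
  rw [add_comm _ (μ Δ), hsplit hΔ]
  refine h.withTop_add_le hb_top ?_
  rintro _ ⟨C, hC, hCΔ, rfl⟩
  calc μ C + b ≤ μ C + μ Cᶜ := by
        gcongr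
        exact hb ⟨Cᶜ, hC.isClosed.isOpen_compl, Set.subset_compl_comm.mp hCΔ, rfl⟩
    _ = μ Set.univ := hsplit hC.measurableSet

end Regularity

theorem finite_weaklyInnerRegular_inner_and_outer_regular_general
    {X : Type*} [TopologicalSpace X] [MeasurableSpace X] [BorelSpace X]
    [LocallyCompactSpace X] [T2Space X]
    {E : Type*} [AddCommGroup E] [PartialOrder E] [IsOrderedAddMonoid E]
    (μ : Set X → WithTop E) (hμ : IsPosMeasure μ) (hfin : μ Set.univ ≠ ⊤)
    (hrestr : ∀ U : Set X, IsOpen U → IsCompact (closure U) → RestrictionRegularBorel μ U)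
    (hw : ∀ Δ : Set X, MeasurableSet Δ → WeaklyInnerRegularAt μ Δ) :
    ∀ Δ : Set X, MeasurableSet Δ → InnerRegularAt μ Δ ∧ OuterRegularAt μ Δ := by
  have inner : ∀ Δ : Set X, MeasurableSet Δ → InnerRegularAt μ Δ := fun Δ hΔ =>
    innerRegularAt_of_weaklyInnerRegularAt hμ hΔ (hw Δ hΔ) fun _ hK =>
      innerRegularAt_inter_isCompact hμ hfin hrestr hΔ hK
  exact fun Δ hΔ =>
    ⟨inner Δ hΔ, outerRegularAt_of_innerRegularAt_compl hμ hfin hΔ (inner _ hΔ.compl)⟩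

/-- Let `X` be a locally compact Hausdorff space, `E` a monotone complete and normal
partially ordered vector space, and `μ` a finite (`E`-valued) positive Borel measure on
`X` whose restriction to each relatively compact open subset is a regular Borel measure
and which is weakly inner regular at all Borel sets. Then `μ` is both inner regular and
outer regular at all Borel sets. -/
theorem finite_weaklyInnerRegular_inner_and_outer_regular
    {X : Type*} [TopologicalSpace X] [MeasurableSpace X] [BorelSpace X]
    [LocallyCompactSpace X] [T2Space X]
    {E : Type*} [AddCommGroup E] [PartialOrder E] [IsOrderedAddMonoid E] [Module ℝ E]
    (hmc : MonotoneComplete E) (hnormal : IsNormalPOVS E)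
    (μ : Set X → WithTop E) (hμ : IsPosMeasure μ) (hfin : μ Set.univ ≠ ⊤)
    (hrestr : ∀ U : Set X, IsOpen U → IsCompact (closure U) → RestrictionRegularBorel μ U)
    (hw : ∀ Δ : Set X, MeasurableSet Δ → WeaklyInnerRegularAt μ Δ) :
    ∀ Δ : Set X, MeasurableSet Δ → InnerRegularAt μ Δ ∧ OuterRegularAt μ Δ :=
  finite_weaklyInnerRegular_inner_and_outer_regular_general μ hμ hfin hrestr hw
end

section
/- Let X be a locally compact Hausdorff space with Borel σ-algebra B, let E be a monotone complete and normal partially ordered vector space, and let μ : B → E₊ be a set map. Then μ is a finite positive measure if and only if for every positive order continuous functional x′ on E, the real-valued set map Δ ↦ ⟨μ(Δ), x′⟩ is a finite measure. -/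
/-- A finite positive `E`-valued measure on the Borel σ-algebra of `X`: it vanishes at
`∅`, takes positive values, and is σ-additive in the order sense: for pairwise disjoint
Borel sets, the measure of the union is the supremum of the partial sums. -/
def IsFiniteMeasureVal {X : Type*} [MeasurableSpace X] {E : Type*} [AddCommGroup E] [PartialOrder E] [IsOrderedAddMonoid E]
    (μ : Set X → E) : Prop :=
  μ ∅ = 0 ∧ (∀ Δ : Set X, MeasurableSet Δ → 0 ≤ μ Δ) ∧
  ∀ Δ : ℕ → Set X, (∀ n, MeasurableSet (Δ n)) → Pairwise (Function.onFun Disjoint Δ) →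
    IsLUB {y : E | ∃ N : ℕ, y = ∑ n ∈ Finset.range N, μ (Δ n)} (μ (⋃ n, Δ n))

section Functionals

variable {E : Type*} [AddCommGroup E] [PartialOrder E] [IsOrderedAddMonoid E] [Module ℝ E]

theorem IsPosOrderContFunctional.monotone_s7 {φ : E →ₗ[ℝ] ℝ} (hφ : IsPosOrderContFunctional φ) :
    Monotone φ := fun a b hab => by
  simpa [map_sub] using hφ.1 (b - a) (sub_nonneg.mpr hab)

/-- The defects `y - s` decrease to `0`, so order continuity sends their images to `0`. -/
theorem IsPosOrderContFunctional.isLUB_image {φ : E →ₗ[ℝ] ℝ} (hφ : IsPosOrderContFunctional φ)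
    {S : Set E} {y : E} (hne : S.Nonempty) (hdir : DirectedOn (· ≤ ·) S) (hy : IsLUB S y) :
    IsLUB (φ '' S) (φ y) := by
  have hdefect : IsGLB ((y - ·) '' S) 0 := by
    refine ⟨?_, fun c hc => ?_⟩
    · rintro _ ⟨s, hs, rfl⟩
      exact sub_nonneg.mpr (hy.1 hs)
    · have : y ≤ y - c := hy.2 fun s hs => le_sub_comm.mp (hc ⟨s, hs, rfl⟩)
      exact (le_sub_self_iff y).mp this
  have hdefect_dir : DirectedOn (· ≥ ·) ((y - ·) '' S) := by
    rintro _ ⟨a, ha, rfl⟩ _ ⟨b, hb, rfl⟩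
    obtain ⟨c, hc, hac, hbc⟩ := hdir a ha b hb
    exact ⟨y - c, ⟨c, hc, rfl⟩, sub_le_sub_left hac y, sub_le_sub_left hbc y⟩
  have himage := hφ.2 _ (hne.image _) hdefect_dir hdefect
  refine ⟨hφ.monotone_s7.mem_upperBounds_image hy.1, fun c hc => ?_⟩
  suffices φ y - c ≤ 0 by linarith
  refine himage.2 ?_
  rintro _ ⟨_, ⟨s, hs, rfl⟩, rfl⟩
  have := hc ⟨s, hs, rfl⟩
  rw [map_sub]
  linarith

namespace IsNormalPOVS

theorem le_of_forall_functional (hnormal : IsNormalPOVS E) {a b : E}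
    (h : ∀ φ : E →ₗ[ℝ] ℝ, IsPosOrderContFunctional φ → φ a ≤ φ b) : a ≤ b :=
  sub_nonneg.mp <| (hnormal _).mp fun φ hφ => by
    simpa [map_sub] using h φ hφ

theorem eq_of_forall_functional (hnormal : IsNormalPOVS E) {a b : E}
    (h : ∀ φ : E →ₗ[ℝ] ℝ, IsPosOrderContFunctional φ → φ a = φ b) : a = b :=
  le_antisymm (hnormal.le_of_forall_functional fun φ hφ => (h φ hφ).le)
    (hnormal.le_of_forall_functional fun φ hφ => (h φ hφ).ge)

theorem isLUB_of_forall_functional (hnormal : IsNormalPOVS E) {S : Set E} {y : E}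
    (h : ∀ φ : E →ₗ[ℝ] ℝ, IsPosOrderContFunctional φ → IsLUB (φ '' S) (φ y)) :
    IsLUB S y := by
  refine ⟨fun s hs => ?_, fun c hc => ?_⟩
  · exact hnormal.le_of_forall_functional fun φ hφ => (h φ hφ).1 ⟨s, hs, rfl⟩
  · exact hnormal.le_of_forall_functional fun φ hφ =>
      (h φ hφ).2 (hφ.monotone_s7.mem_upperBounds_image hc)

end IsNormalPOVS

end Functionals

section PartialSums

variable {M : Type*} [AddCommMonoid M]

theorem image_partialSums {N F : Type*} [AddCommMonoid N] [FunLike F M N]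
    [AddMonoidHomClass F M N] (φ : F) (f : ℕ → M) :
    φ '' {y | ∃ n, y = ∑ i ∈ Finset.range n, f i} =
      {z | ∃ n, z = ∑ i ∈ Finset.range n, φ (f i)} := by
  ext z
  simp [eq_comm (a := z), map_sum]

theorem directedOn_partialSums [PartialOrder M] [IsOrderedAddMonoid M] {f : ℕ → M}
    (hf : ∀ i, 0 ≤ f i) :
    DirectedOn (· ≤ ·) {y | ∃ n, y = ∑ i ∈ Finset.range n, f i} := by
  rintro _ ⟨m, rfl⟩ _ ⟨n, rfl⟩
  refine ⟨_, ⟨max m n, rfl⟩, ?_, ?_⟩ <;>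
    exact Finset.sum_le_sum_of_subset_of_nonneg
      (Finset.range_subset_range.mpr (by omega)) fun i _ _ => hf i

end PartialSums

theorem finiteMeasure_iff_functionals_general
    {X : Type*} [MeasurableSpace X]
    {E : Type*} [AddCommGroup E] [PartialOrder E] [IsOrderedAddMonoid E] [Module ℝ E]
    (hnormal : IsNormalPOVS E)
    (μ : Set X → E) :
    IsFiniteMeasureVal μ ↔
      ∀ φ : E →ₗ[ℝ] ℝ, IsPosOrderContFunctional φ →
        IsFiniteMeasureVal (fun Δ : Set X => φ (μ Δ)) := by
  constructor
  · rintro ⟨hempty, hpos, hσ⟩ φ hφ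
    refine ⟨by simp [hempty], fun Δ hΔ => hφ.1 _ (hpos Δ hΔ), fun Δ hΔ hdisj => ?_⟩
    beta_reduce
    rw [← image_partialSums]
    exact hφ.isLUB_image ⟨0, 0, by simp⟩ (directedOn_partialSums fun i => hpos _ (hΔ i))
      (hσ Δ hΔ hdisj)
  · intro h
    refine ⟨?_, fun Δ hΔ => (hnormal _).mp fun φ hφ => (h φ hφ).2.1 Δ hΔ,
      fun Δ hΔ hdisj => hnormal.isLUB_of_forall_functional fun φ hφ => ?_⟩
    · exact hnormal.eq_of_forall_functional fun φ hφ => by simpa using (h φ hφ).1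
    · rw [image_partialSums]
      exact (h φ hφ).2.2 Δ hΔ hdisj

/-- Let `X` be a locally compact Hausdorff space with Borel σ-algebra `B`, `E` a
monotone complete and normal partially ordered vector space, and `μ : B → E₊` a set
map. Then `μ` is a finite positive measure if and only if for every positive order
continuous functional `x′` on `E` the real-valued set map `Δ ↦ ⟨μ Δ, x′⟩` is a finite
measure. -/
theorem finiteMeasure_iff_functionals
    {X : Type*} [TopologicalSpace X] [MeasurableSpace X] [BorelSpace X]
    [LocallyCompactSpace X] [T2Space X]
    {E : Type*} [AddCommGroup E] [PartialOrder E] [IsOrderedAddMonoid E] [Module ℝ E]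
    (hmc : MonotoneComplete E) (hnormal : IsNormalPOVS E)
    (μ : Set X → E) (hpos : ∀ Δ : Set X, MeasurableSet Δ → 0 ≤ μ Δ) :
    IsFiniteMeasureVal μ ↔
      ∀ φ : E →ₗ[ℝ] ℝ, IsPosOrderContFunctional φ →
        IsFiniteMeasureVal (fun Δ : Set X => φ (μ Δ)) :=
  finiteMeasure_iff_functionals_general hnormal μ
end

section
/- Let E be a KB-space. Then the regular norm on the space of regular operators on E is a Levi norm: every increasing net of positive regular operators that is bounded in the (regular/operator) norm has a supremum in the regular operators. -/
/-!
Order `𝒮` by `opLE` and view it as a net. For `x ≥ 0` the net `T ↦ T x` is increasing, positive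
and norm bounded, so in a KB-space it converges to `sup_{T ∈ 𝒮} T x`; writing `x = x⁺ - x⁻` it
converges for every `x`. A pointwise limit of linear maps is linear, and since the limit is the
supremum of the net on the positive cone, it is the supremum of `𝒮` for the operator order.
-/

/-- A positive operator. -/
def IsPosOp {E : Type*} [AddCommGroup E] [PartialOrder E] [IsOrderedAddMonoid E] [Module ℝ E] (T : E →ₗ[ℝ] E) : Prop :=
  ∀ x : E, 0 ≤ x → 0 ≤ T x

/-- A regular operator: a difference of two positive operators. -/
def IsRegularOp {E : Type*} [AddCommGroup E] [PartialOrder E] [IsOrderedAddMonoid E] [Module ℝ E] (T : E →ₗ[ℝ] E) : Prop :=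
  ∃ P Q : E →ₗ[ℝ] E, IsPosOp P ∧ IsPosOp Q ∧ T = P - Q

/-- The order on operators induced by the cone of positive operators. -/
def opLE {E : Type*} [AddCommGroup E] [PartialOrder E] [IsOrderedAddMonoid E] [Module ℝ E] (T S : E →ₗ[ℝ] E) : Prop :=
  IsPosOp (S - T)

/-- A KB-space: every increasing norm bounded net (equivalently: nonempty upward
directed norm bounded set) in the positive cone is norm convergent to its supremum. -/
def IsKBSpace (E : Type*) [NormedAddCommGroup E] [Lattice E] [HasSolidNorm E]
    [IsOrderedAddMonoid E] : Prop :=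
  ∀ S : Set E, S.Nonempty → (∀ x ∈ S, 0 ≤ x) → DirectedOn (· ≤ ·) S →
    (∃ M : ℝ, ∀ x ∈ S, ‖x‖ ≤ M) →
    ∃ y : E, IsLUB S y ∧ ∀ ε : ℝ, 0 < ε → ∃ x ∈ S, ∀ z ∈ S, x ≤ z → ‖z - y‖ < ε

open Filter Topology

section Order

variable {E : Type*} [AddCommGroup E] [PartialOrder E] [IsOrderedAddMonoid E] [Module ℝ E]

theorem opLE_iff_apply_le {T S : E →ₗ[ℝ] E} : opLE T S ↔ ∀ x, 0 ≤ x → T x ≤ S x := by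
  simp only [opLE, IsPosOp, LinearMap.sub_apply, sub_nonneg]

theorem opLE_refl (T : E →ₗ[ℝ] E) : opLE T T :=
  opLE_iff_apply_le.2 fun _ _ => le_rfl

theorem opLE_trans {T S R : E →ₗ[ℝ] E} (hTS : opLE T S) (hSR : opLE S R) : opLE T R :=
  opLE_iff_apply_le.2 fun x hx =>
    (opLE_iff_apply_le.1 hTS x hx).trans (opLE_iff_apply_le.1 hSR x hx)

def opAtTop (𝒮 : Set (E →ₗ[ℝ] E)) : Filter (E →ₗ[ℝ] E) :=
  ⨅ T₀ : 𝒮, 𝓟 {T | T ∈ 𝒮 ∧ opLE (T₀ : E →ₗ[ℝ] E) T}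

theorem tail_mem_opAtTop {𝒮 : Set (E →ₗ[ℝ] E)} {T₀ : E →ₗ[ℝ] E} (hT₀ : T₀ ∈ 𝒮) :
    {T | T ∈ 𝒮 ∧ opLE T₀ T} ∈ opAtTop 𝒮 :=
  mem_iInf_of_mem (⟨T₀, hT₀⟩ : 𝒮) (mem_principal_self _)

theorem opAtTop_neBot {𝒮 : Set (E →ₗ[ℝ] E)} (hne : 𝒮.Nonempty) (hdir : DirectedOn opLE 𝒮) :
    (opAtTop 𝒮).NeBot := by
  have := hne.to_subtype
  refine iInf_neBot_of_directed' ?_ fun T₀ => principal_neBot_iff.2 ⟨T₀, T₀.2, opLE_refl _⟩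
  rintro ⟨T₁, hT₁⟩ ⟨T₂, hT₂⟩
  obtain ⟨R, hR, hT₁R, hT₂R⟩ := hdir T₁ hT₁ T₂ hT₂
  exact ⟨⟨R, hR⟩, principal_mono.2 fun T hT => ⟨hT.1, opLE_trans hT₁R hT.2⟩,
    principal_mono.2 fun T hT => ⟨hT.1, opLE_trans hT₂R hT.2⟩⟩

theorem isPosOp_of_isLUB_apply {𝒮 : Set (E →ₗ[ℝ] E)} (hne : 𝒮.Nonempty)
    (hpos : ∀ T ∈ 𝒮, IsPosOp T) {U : E →ₗ[ℝ] E}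
    (hU : ∀ x, 0 ≤ x → IsLUB ((fun T : E →ₗ[ℝ] E => T x) '' 𝒮) (U x)) : IsPosOp U := by
  obtain ⟨T₀, hT₀⟩ := hne
  intro x hx
  exact (hpos T₀ hT₀ x hx).trans ((hU x hx).1 ⟨T₀, hT₀, rfl⟩)

theorem opLE_of_mem_of_isLUB_apply {𝒮 : Set (E →ₗ[ℝ] E)} {U : E →ₗ[ℝ] E}
    (hU : ∀ x, 0 ≤ x → IsLUB ((fun T : E →ₗ[ℝ] E => T x) '' 𝒮) (U x)) :
    ∀ T ∈ 𝒮, opLE T U :=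
  fun T hT => opLE_iff_apply_le.2 fun x hx => (hU x hx).1 ⟨T, hT, rfl⟩

theorem opLE_of_isLUB_apply_of_forall_opLE {𝒮 : Set (E →ₗ[ℝ] E)} {U W : E →ₗ[ℝ] E}
    (hU : ∀ x, 0 ≤ x → IsLUB ((fun T : E →ₗ[ℝ] E => T x) '' 𝒮) (U x))
    (hW : ∀ T ∈ 𝒮, opLE T W) : opLE U W := by
  refine opLE_iff_apply_le.2 fun x hx => (hU x hx).2 ?_
  rintro _ ⟨T, hT, rfl⟩
  exact opLE_iff_apply_le.1 (hW T hT) x hx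

end Order

section KBSpace

variable {E : Type*} [NormedAddCommGroup E] [Lattice E] [HasSolidNorm E] [IsOrderedAddMonoid E]
  [NormedSpace ℝ E]

theorem IsKBSpace.exists_isLUB_tendsto_apply (hKB : IsKBSpace E) {𝒮 : Set (E →ₗ[ℝ] E)}
    (hne : 𝒮.Nonempty) (hpos : ∀ T ∈ 𝒮, IsPosOp T) (hdir : DirectedOn opLE 𝒮)
    {M : ℝ} (hM : ∀ T ∈ 𝒮, ∀ x : E, ‖T x‖ ≤ M * ‖x‖) {x : E} (hx : 0 ≤ x) :
    ∃ y, IsLUB ((fun T : E →ₗ[ℝ] E => T x) '' 𝒮) y ∧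
      Tendsto (fun T : E →ₗ[ℝ] E => T x) (opAtTop 𝒮) (𝓝 y) := by
  have himage_dir : DirectedOn (· ≤ ·) ((fun T : E →ₗ[ℝ] E => T x) '' 𝒮) := by
    rintro _ ⟨T, hT, rfl⟩ _ ⟨S, hS, rfl⟩
    obtain ⟨R, hR, hTR, hSR⟩ := hdir T hT S hS
    exact ⟨R x, ⟨R, hR, rfl⟩, opLE_iff_apply_le.1 hTR x hx, opLE_iff_apply_le.1 hSR x hx⟩
  obtain ⟨y, hy, hconv⟩ := hKB _ (hne.image _) (by rintro _ ⟨T, hT, rfl⟩; exact hpos T hT x hx)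
    himage_dir ⟨M * ‖x‖, by rintro _ ⟨T, hT, rfl⟩; exact hM T hT x⟩
  refine ⟨y, hy, Metric.tendsto_nhds.2 fun ε hε => ?_⟩
  obtain ⟨_, ⟨T₀, hT₀, rfl⟩, hT₀ε⟩ := hconv ε hε
  filter_upwards [tail_mem_opAtTop hT₀] with T hT
  rw [dist_eq_norm]
  exact hT₀ε (T x) ⟨T, hT.1, rfl⟩ (opLE_iff_apply_le.1 hT.2 x hx)

theorem IsKBSpace.exists_tendsto_apply (hKB : IsKBSpace E) {𝒮 : Set (E →ₗ[ℝ] E)}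
    (hne : 𝒮.Nonempty) (hpos : ∀ T ∈ 𝒮, IsPosOp T) (hdir : DirectedOn opLE 𝒮)
    {M : ℝ} (hM : ∀ T ∈ 𝒮, ∀ x : E, ‖T x‖ ≤ M * ‖x‖) (x : E) :
    ∃ y, Tendsto (fun T : E →ₗ[ℝ] E => T x) (opAtTop 𝒮) (𝓝 y) := by
  obtain ⟨yp, -, hp⟩ := hKB.exists_isLUB_tendsto_apply hne hpos hdir hM (posPart_nonneg x)
  obtain ⟨yn, -, hn⟩ := hKB.exists_isLUB_tendsto_apply hne hpos hdir hM (negPart_nonneg x)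
  refine ⟨yp - yn, ?_⟩
  simpa only [← map_sub, posPart_sub_negPart] using hp.sub hn

end KBSpace

theorem kbSpace_regularOps_leviNorm_general {E : Type*} [NormedAddCommGroup E] [Lattice E]
    [HasSolidNorm E] [IsOrderedAddMonoid E]
    [NormedSpace ℝ E] (hKB : IsKBSpace E)
    (𝒮 : Set (E →ₗ[ℝ] E)) (hne : 𝒮.Nonempty) (hpos : ∀ T ∈ 𝒮, IsPosOp T)
    (hdir : DirectedOn opLE 𝒮)
    (hbdd : ∃ M : ℝ, ∀ T ∈ 𝒮, ∀ x : E, ‖T x‖ ≤ M * ‖x‖) :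
    ∃ U : E →ₗ[ℝ] E, IsRegularOp U ∧ (∀ T ∈ 𝒮, opLE T U) ∧
      ∀ W : E →ₗ[ℝ] E, IsRegularOp W → (∀ T ∈ 𝒮, opLE T W) → opLE U W := by
  obtain ⟨M, hM⟩ := hbdd
  have := opAtTop_neBot hne hdir
  have hlim : ∀ x, Tendsto (fun T : E →ₗ[ℝ] E => T x) (opAtTop 𝒮)
      (𝓝 (limUnder (opAtTop 𝒮) fun T : E →ₗ[ℝ] E => T x)) := fun x =>
    tendsto_nhds_limUnder (hKB.exists_tendsto_apply hne hpos hdir hM x)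
  let U : E →ₗ[ℝ] E := linearMapOfTendsto _ id (tendsto_pi_nhds.2 hlim)
  have hU : ∀ x, 0 ≤ x → IsLUB ((fun T : E →ₗ[ℝ] E => T x) '' 𝒮) (U x) := by
    intro x hx
    obtain ⟨y, hy, hTy⟩ := hKB.exists_isLUB_tendsto_apply hne hpos hdir hM hx
    rwa [show U x = y from tendsto_nhds_unique (hlim x) hTy]
  refine ⟨U, ⟨U, 0, isPosOp_of_isLUB_apply hne hpos hU, fun x _ => le_rfl, (sub_zero U).symm⟩,
    opLE_of_mem_of_isLUB_apply hU, fun W _ hW => opLE_of_isLUB_apply_of_forall_opLE hU hW⟩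

/-- Let `E` be a KB-space. Then the regular norm on the regular operators on `E` is a
Levi norm: every increasing net of positive regular operators that is bounded in the
(regular, equivalently operator) norm has a supremum among the regular operators. -/
theorem kbSpace_regularOps_leviNorm {E : Type*} [NormedAddCommGroup E] [Lattice E]
    [HasSolidNorm E] [IsOrderedAddMonoid E]
    [NormedSpace ℝ E] [CompleteSpace E] (hKB : IsKBSpace E)
    (𝒮 : Set (E →ₗ[ℝ] E)) (hne : 𝒮.Nonempty) (hpos : ∀ T ∈ 𝒮, IsPosOp T)
    (hdir : DirectedOn opLE 𝒮)
    (hbdd : ∃ M : ℝ, ∀ T ∈ 𝒮, ∀ x : E, ‖T x‖ ≤ M * ‖x‖) :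
    ∃ U : E →ₗ[ℝ] E, IsRegularOp U ∧ (∀ T ∈ 𝒮, opLE T U) ∧
      ∀ W : E →ₗ[ℝ] E, IsRegularOp W → (∀ T ∈ 𝒮, opLE T W) → opLE U W :=
  kbSpace_regularOps_leviNorm_general hKB 𝒮 hne hpos hdir hbdd
end

section
/- Let H be a complex Hilbert space and L a strongly closed complex linear subspace of B(H). Then the real vector space L_sa of self-adjoint elements of L, with the ordering inherited from B(H)_sa, is quasi-perfect: it is normal, and every increasing net (T_λ) in the positive cone of L_sa such that sup_λ φ(T_λ) < ∞ for every positive linear functional φ on L_sa has a supremum in L_sa. -/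
/-!
Everything rests on monotone convergence for operators. Let `S` be a nonempty upward directed
set of self-adjoint operators whose quadratic forms `⟪T x, x⟫` are bounded above for each `x`.
Applying Banach–Steinhaus to the square roots `√(T - T₀)` for `T ≥ T₀`, which satisfy
`‖√(T - T₀) x‖² = ⟪(T - T₀) x, x⟫`, shows that `S` is eventually bounded in norm, and then
`‖(T - T₁) x‖² ≤ ‖T - T₁‖ ⟪(T - T₁) x, x⟫` makes `T x` a Cauchy net. Its strong limit `U` lies
in `L` because `L` is strongly closed, and `⟪U x, x⟫` is the supremum of the `⟪T x, x⟫`.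

The vector functionals `T ↦ re ⟪T x, x⟫` are positive on `L_sa`, so they bound every net as in
the second claim, whose supremum is then the limit `U`. They are also order continuous: if a
downward directed `S ⊆ L_sa` has infimum `0`, then minus the supremum of `-S` is a lower bound
in `L_sa`, which forces `inf ⟪T x, x⟫ = 0`. Since these functionals detect positivity, `L_sa`
is normal.
-/

variable {H : Type*} [NormedAddCommGroup H] [InnerProductSpace ℂ H] [CompleteSpace H]

/-- A (self-adjoint) operator is positive when `⟨T x, x⟩ ≥ 0` for all `x`. -/
def IsPosOpH (T : H →L[ℂ] H) : Prop :=
  ∀ x : H, 0 ≤ (inner ℂ (T x) x : ℂ).re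

/-- The Loewner order on (self-adjoint) operators. -/
def opleH (T S : H →L[ℂ] H) : Prop := IsPosOpH (S - T)

/-- A set of operators is closed in the strong operator topology: any operator in its
SOT-closure (approximated pointwise on finite sets of vectors) belongs to it. -/
def SOTClosed (L : Set (H →L[ℂ] H)) : Prop :=
  ∀ T : H →L[ℂ] H,
    (∀ ε : ℝ, 0 < ε → ∀ s : Finset H, ∃ S ∈ L, ∀ x ∈ s, ‖S x - T x‖ < ε) → T ∈ L

/-- The self-adjoint part of `L`. -/
def saPart (L : Set (H →L[ℂ] H)) : Set (H →L[ℂ] H) :=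
  {T | T ∈ L ∧ IsSelfAdjoint T}

/-- A real-linear functional is positive on `A` if it is nonnegative on the positive
operators belonging to `A`. -/
def PosFunOn (A : Set (H →L[ℂ] H)) (φ : (H →L[ℂ] H) →ₗ[ℝ] ℝ) : Prop :=
  ∀ T ∈ A, IsPosOpH T → 0 ≤ φ T

/-- A positive functional on `A` is order continuous if it maps every nonempty
downward directed subset of `A` with infimum `0` (relative to `A` in the Loewner order)
to a set of reals with infimum `0`. -/
def PosOrderContFunOn (A : Set (H →L[ℂ] H)) (φ : (H →L[ℂ] H) →ₗ[ℝ] ℝ) : Prop :=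
  PosFunOn A φ ∧
  ∀ S : Set (H →L[ℂ] H), S ⊆ A → S.Nonempty →
    DirectedOn (fun T T' => opleH T' T) S →
    ((∀ T ∈ S, IsPosOpH T) ∧
      ∀ C ∈ A, (∀ T ∈ S, opleH C T) → IsPosOpH (-C)) →
    IsGLB (φ '' S) 0

open Filter Topology

section InnerProductSpace

variable {E : Type*} [NormedAddCommGroup E] [InnerProductSpace ℂ E]

noncomputable def vectorFunctional (x : E) : (E →L[ℂ] E) →ₗ[ℝ] ℝ where
  toFun T := (inner ℂ (T x) x).re
  map_add' T S := by simp
  map_smul' r T := by simp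

@[simp]
lemma vectorFunctional_apply (x : E) (T : E →L[ℂ] E) :
    vectorFunctional x T = (inner ℂ (T x) x).re := rfl

lemma opleH_iff_forall_vectorFunctional_le {T S : E →L[ℂ] E} :
    opleH T S ↔ ∀ x, vectorFunctional x T ≤ vectorFunctional x S := by
  simp only [opleH, IsPosOpH, ← vectorFunctional_apply, map_sub, sub_nonneg]

lemma opleH_neg_neg {T S : E →L[ℂ] E} : opleH (-T) (-S) ↔ opleH S T := by
  rw [opleH, opleH, neg_sub_neg]

lemma opleH_of_forall_isLUB {S : Set (E →L[ℂ] E)} {T U : E →L[ℂ] E}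
    (hU : ∀ x, IsLUB (vectorFunctional x '' S) (vectorFunctional x U)) (hT : T ∈ S) :
    opleH T U :=
  opleH_iff_forall_vectorFunctional_le.2 fun x ↦ (hU x).1 ⟨T, hT, rfl⟩

lemma opleH_iff_of_forall_isLUB {S : Set (E →L[ℂ] E)} {U : E →L[ℂ] E}
    (hU : ∀ x, IsLUB (vectorFunctional x '' S) (vectorFunctional x U)) {W : E →L[ℂ] E} :
    opleH U W ↔ ∀ T ∈ S, opleH T W := by
  simp only [opleH_iff_forall_vectorFunctional_le]
  refine ⟨fun h T hT x ↦ ((hU x).1 ⟨T, hT, rfl⟩).trans (h x), fun h x ↦ (hU x).2 ?_⟩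
  rintro _ ⟨T, hT, rfl⟩
  exact h T hT x

lemma vectorFunctional_mono (x : E) : Monotone (vectorFunctional x : (E →L[ℂ] E) → ℝ) :=
  fun T S h ↦ by
    simpa [← sub_nonneg, inner_sub_left] using
      ((ContinuousLinearMap.le_def T S).1 h).re_inner_nonneg_left x

lemma vectorFunctional_nonneg {T : E →L[ℂ] E} (hT : 0 ≤ T) (x : E) :
    0 ≤ vectorFunctional x T := by
  simpa using vectorFunctional_mono x hT

lemma tendsto_vectorFunctional {ι : Type*} {l : Filter ι} {T : ι → E →L[ℂ] E} {U : E →L[ℂ] E}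
    {x : E} (h : Tendsto (fun i ↦ T i x) l (𝓝 (U x))) :
    Tendsto (fun i ↦ vectorFunctional x (T i)) l (𝓝 (vectorFunctional x U)) :=
  (Complex.continuous_re.tendsto _).comp (h.inner tendsto_const_nhds)

end InnerProductSpace

lemma nonneg_iff_isPosOpH {T : H →L[ℂ] H} (hT : IsSelfAdjoint T) : 0 ≤ T ↔ IsPosOpH T := by
  simp [ContinuousLinearMap.nonneg_iff_isPositive, ContinuousLinearMap.isPositive_def', hT,
    IsPosOpH, ContinuousLinearMap.reApplyInnerSelf_apply]

lemma le_iff_opleH {T S : H →L[ℂ] H} (hT : IsSelfAdjoint T) (hS : IsSelfAdjoint S) :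
    T ≤ S ↔ opleH T S := by
  rw [← sub_nonneg, nonneg_iff_isPosOpH (hS.sub hT), opleH]

section Positive

variable {T : H →L[ℂ] H}

lemma sqrt_apply_sqrt_apply (hT : 0 ≤ T) (x : H) : CFC.sqrt T (CFC.sqrt T x) = T x := by
  conv_rhs => rw [← CFC.sqrt_mul_sqrt_self T hT]
  rfl

lemma vectorFunctional_eq_norm_sqrt_apply_sq (hT : 0 ≤ T) (x : H) :
    vectorFunctional x T = ‖CFC.sqrt T x‖ ^ 2 := by
  have hR := (ContinuousLinearMap.nonneg_iff_isPositive (CFC.sqrt T)).1 (CFC.sqrt_nonneg T)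
  rw [vectorFunctional_apply, ← sqrt_apply_sqrt_apply hT, hR.inner_left_eq_inner_right,
    ← inner_self_eq_norm_sq (𝕜 := ℂ)]
  rfl

lemma norm_sqrt_sq (hT : 0 ≤ T) : ‖CFC.sqrt T‖ ^ 2 = ‖T‖ := by
  rw [CFC.norm_sqrt T hT, Real.sq_sqrt (norm_nonneg T)]

lemma norm_apply_sq_le_mul_vectorFunctional (hT : 0 ≤ T) (x : H) :
    ‖T x‖ ^ 2 ≤ ‖T‖ * vectorFunctional x T := by
  rw [vectorFunctional_eq_norm_sqrt_apply_sq hT, ← norm_sqrt_sq hT, ← mul_pow,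
    ← sqrt_apply_sqrt_apply hT]
  gcongr
  exact (CFC.sqrt T).le_opNorm _

lemma exists_norm_le_of_bddAbove_vectorFunctional {ι : Type*} {T : ι → H →L[ℂ] H}
    (hT : ∀ i, 0 ≤ T i) (hbdd : ∀ x, BddAbove (Set.range fun i ↦ vectorFunctional x (T i))) :
    ∃ M, ∀ i, ‖T i‖ ≤ M := by
  obtain ⟨C, hC⟩ := banach_steinhaus (g := fun i ↦ CFC.sqrt (T i)) fun x ↦ by
    obtain ⟨c, hc⟩ := hbdd x
    refine ⟨√c, fun i ↦ Real.le_sqrt_of_sq_le ?_⟩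
    rw [← vectorFunctional_eq_norm_sqrt_apply_sq (hT i)]
    exact hc ⟨i, rfl⟩
  refine ⟨C ^ 2, fun i ↦ ?_⟩
  rw [← norm_sqrt_sq (hT i)]
  exact pow_le_pow_left₀ (norm_nonneg _) (hC i) 2

end Positive

section PointwiseLimit

variable {ι : Type*} {l : Filter ι} [l.NeBot]

lemma exists_continuousLinearMap_coe_eq_of_tendsto {𝕜 E F : Type*} [NontriviallyNormedField 𝕜]
    [NormedAddCommGroup E] [NormedSpace 𝕜 E] [NormedAddCommGroup F] [NormedSpace 𝕜 F]
    {T : ι → E →L[𝕜] F} {f : E → F} (hf : ∀ x, Tendsto (fun i ↦ T i x) l (𝓝 (f x)))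
    {M : ℝ} (hM : ∀ᶠ i in l, ‖T i‖ ≤ M) : ∃ U : E →L[𝕜] F, ⇑U = f :=
  ⟨(linearMapOfTendsto f (fun i ↦ (T i : E →ₗ[𝕜] F)) (tendsto_pi_nhds.2 hf)).mkContinuous M
    fun x ↦ le_of_tendsto (hf x).norm (hM.mono fun i hi ↦ (T i).le_of_opNorm_le hi x), rfl⟩

lemma isSelfAdjoint_of_tendsto_apply {𝕜 E : Type*} [RCLike 𝕜] [NormedAddCommGroup E]
    [InnerProductSpace 𝕜 E] [CompleteSpace E] {T : ι → E →L[𝕜] E} {U : E →L[𝕜] E}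
    (hT : ∀ᶠ i in l, IsSelfAdjoint (T i)) (hU : ∀ x, Tendsto (fun i ↦ T i x) l (𝓝 (U x))) :
    IsSelfAdjoint U := by
  rw [ContinuousLinearMap.isSelfAdjoint_iff_isSymmetric]
  intro x y
  refine tendsto_nhds_unique ((hU x).inner tendsto_const_nhds) ?_
  refine (tendsto_const_nhds.inner (hU y)).congr' (hT.mono fun i hi ↦ ?_)
  exact (ContinuousLinearMap.isSelfAdjoint_iff_isSymmetric.1 hi x y).symm

lemma SOTClosed.mem_of_tendsto_apply {E : Type*} [NormedAddCommGroup E] [InnerProductSpace ℂ E]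
    {L : Set (E →L[ℂ] E)} (hL : SOTClosed L) {T : ι → E →L[ℂ] E} {U : E →L[ℂ] E}
    (hT : ∀ᶠ i in l, T i ∈ L) (hU : ∀ x, Tendsto (fun i ↦ T i x) l (𝓝 (U x))) : U ∈ L := by
  refine hL U fun ε hε s ↦ ?_
  have hclose : ∀ᶠ i in l, ∀ x ∈ s, ‖T i x - U x‖ < ε :=
    (eventually_all_finset s).2 fun x _ ↦ by
      simpa only [dist_eq_norm] using Metric.tendsto_nhds.1 (hU x) ε hε
  obtain ⟨i, hiL, hi⟩ := (hT.and hclose).exists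
  exact ⟨T i, hiL, hi⟩

end PointwiseLimit

lemma cauchySeq_of_forall_exists_dist_lt {α β : Type*} [PseudoMetricSpace α] [Preorder β]
    [IsDirectedOrder β] [Nonempty β] {u : β → α}
    (h : ∀ ε > 0, ∃ N, ∀ n ≥ N, dist (u n) (u N) < ε) : CauchySeq u := by
  refine Metric.cauchy_iff.2 ⟨map_neBot, fun ε hε ↦ ?_⟩
  obtain ⟨N, hN⟩ := h (ε / 2) (half_pos hε)
  refine ⟨u '' Set.Ici N, image_mem_map (Ici_mem_atTop N), ?_⟩
  rintro _ ⟨m, hm, rfl⟩ _ ⟨n, hn, rfl⟩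
  calc dist (u m) (u n) ≤ dist (u m) (u N) + dist (u n) (u N) := dist_triangle_right _ _ _
    _ < ε / 2 + ε / 2 := add_lt_add (hN m hm) (hN n hn)
    _ = ε := add_halves ε

section MonotoneConvergence

variable {S : Set (H →L[ℂ] H)} [Nonempty S] [IsDirectedOrder S]

lemma eventually_norm_le_of_bddAbove_vectorFunctional
    (hbdd : ∀ x, BddAbove (vectorFunctional x '' S)) :
    ∃ M, ∀ᶠ T : S in atTop, ‖(T : H →L[ℂ] H)‖ ≤ M := by
  obtain ⟨T₀⟩ := ‹Nonempty S›
  obtain ⟨M, hM⟩ := exists_norm_le_of_bddAbove_vectorFunctional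
    (T := fun T : Set.Ici T₀ ↦ T.1.1 - T₀.1) (fun T ↦ sub_nonneg.2 T.2) fun x ↦ by
      obtain ⟨c, hc⟩ := hbdd x
      refine ⟨c - vectorFunctional x T₀, ?_⟩
      rintro _ ⟨T, rfl⟩
      exact (map_sub (vectorFunctional x) _ _).trans_le (sub_le_sub_right (hc ⟨_, T.1.2, rfl⟩) _)
  refine ⟨M + ‖(T₀ : H →L[ℂ] H)‖, eventually_atTop.2 ⟨T₀, fun T hT ↦ ?_⟩⟩
  calc ‖(T : H →L[ℂ] H)‖ ≤ ‖(T : H →L[ℂ] H) - T₀‖ + ‖(T₀ : H →L[ℂ] H)‖ :=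
        norm_le_norm_sub_add _ _
    _ ≤ M + ‖(T₀ : H →L[ℂ] H)‖ := by gcongr; exact hM ⟨T, hT⟩

lemma cauchySeq_apply_of_bddAbove_vectorFunctional
    (hbdd : ∀ x, BddAbove (vectorFunctional x '' S)) (x : H) :
    CauchySeq fun T : S ↦ (T : H →L[ℂ] H) x := by
  obtain ⟨M, hM⟩ := eventually_norm_le_of_bddAbove_vectorFunctional hbdd
  obtain ⟨T₀, hT₀⟩ := eventually_atTop.1 hM
  have hM0 : 0 ≤ M := (norm_nonneg _).trans (hT₀ T₀ le_rfl)
  refine cauchySeq_of_forall_exists_dist_lt fun ε hε ↦ ?_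
  set δ := ε ^ 2 / (2 * M + 1)
  have hδ : 2 * M * δ < ε ^ 2 := by
    rw [← mul_div_assoc, div_lt_iff₀ (by positivity)]
    nlinarith [pow_pos hε 2]
  obtain ⟨_, ⟨T', hT', rfl⟩, hT'lt⟩ := exists_lt_of_lt_csSup ⟨_, Set.mem_image_of_mem _ T₀.2⟩
    (sub_lt_self (sSup (vectorFunctional x '' S)) (by positivity : 0 < δ))
  obtain ⟨T₁, h01, h'1⟩ := exists_ge_ge T₀ ⟨T', hT'⟩
  refine ⟨T₁, fun T hT ↦ ?_⟩
  have hpos : 0 ≤ (T : H →L[ℂ] H) - T₁ := sub_nonneg.2 hT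
  have hnorm : ‖(T : H →L[ℂ] H) - T₁‖ ≤ 2 * M :=
    (norm_sub_le _ _).trans (by linarith [hT₀ T (h01.trans hT), hT₀ T₁ h01])
  have hsmall : vectorFunctional x ((T : H →L[ℂ] H) - T₁) ≤ δ := by
    rw [map_sub]
    linarith [le_csSup (hbdd x) ⟨T, T.2, rfl⟩, vectorFunctional_mono x h'1]
  rw [dist_eq_norm, ← sub_apply,
    ← pow_lt_pow_iff_left₀ (norm_nonneg _) hε.le two_ne_zero]
  calc ‖((T : H →L[ℂ] H) - T₁) x‖ ^ 2
      ≤ ‖(T : H →L[ℂ] H) - T₁‖ * vectorFunctional x ((T : H →L[ℂ] H) - T₁) :=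
        norm_apply_sq_le_mul_vectorFunctional hpos x
    _ ≤ 2 * M * δ := mul_le_mul hnorm hsmall (vectorFunctional_nonneg hpos x) (by positivity)
    _ < ε ^ 2 := hδ

theorem exists_tendsto_apply_of_bddAbove_vectorFunctional (hsa : ∀ T ∈ S, IsSelfAdjoint T)
    (hbdd : ∀ x, BddAbove (vectorFunctional x '' S)) :
    ∃ U, IsSelfAdjoint U ∧ (∀ x, Tendsto (fun T : S ↦ (T : H →L[ℂ] H) x) atTop (𝓝 (U x))) ∧
      ∀ x, IsLUB (vectorFunctional x '' S) (vectorFunctional x U) := by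
  choose f hf using fun x ↦
    cauchySeq_tendsto_of_complete (cauchySeq_apply_of_bddAbove_vectorFunctional hbdd x)
  obtain ⟨M, hM⟩ := eventually_norm_le_of_bddAbove_vectorFunctional hbdd
  obtain ⟨U, rfl⟩ := exists_continuousLinearMap_coe_eq_of_tendsto hf hM
  refine ⟨U, isSelfAdjoint_of_tendsto_apply (Eventually.of_forall fun T : S ↦ hsa T.1 T.2) hf, hf,
    fun x ↦ ?_⟩
  rw [Set.image_eq_range]
  exact isLUB_of_tendsto_atTop (fun _ _ h ↦ vectorFunctional_mono x h)
    (tendsto_vectorFunctional (hf x))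

end MonotoneConvergence

lemma exists_mem_saPart_isLUB_vectorFunctional {L : Set (H →L[ℂ] H)} (hL : SOTClosed L)
    {S : Set (H →L[ℂ] H)} (hS : S ⊆ saPart L) (hne : S.Nonempty) (hdir : DirectedOn opleH S)
    (hbdd : ∀ x, BddAbove (vectorFunctional x '' S)) :
    ∃ U ∈ saPart L, ∀ x, IsLUB (vectorFunctional x '' S) (vectorFunctional x U) := by
  have := hne.to_subtype
  have := (hdir.mono' fun T hT T' hT' ↦ (le_iff_opleH (hS hT).2 (hS hT').2).2).isDirectedOrder
  obtain ⟨U, hUsa, hU, hlub⟩ :=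
    exists_tendsto_apply_of_bddAbove_vectorFunctional (fun T hT ↦ (hS hT).2) hbdd
  exact ⟨U, ⟨hL.mem_of_tendsto_apply (Eventually.of_forall fun T : S ↦ (hS T.2).1) hU, hUsa⟩,
    hlub⟩

lemma neg_mem_saPart {L : Submodule ℂ (H →L[ℂ] H)} {T : H →L[ℂ] H}
    (hT : T ∈ saPart (L : Set (H →L[ℂ] H))) : -T ∈ saPart (L : Set (H →L[ℂ] H)) :=
  ⟨neg_mem hT.1, hT.2.neg⟩

open Pointwise in
lemma posOrderContFunOn_vectorFunctional {L : Submodule ℂ (H →L[ℂ] H)}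
    (hL : SOTClosed (L : Set (H →L[ℂ] H))) (x : H) :
    PosOrderContFunOn (saPart (L : Set (H →L[ℂ] H))) (vectorFunctional x) := by
  refine ⟨fun T _ hT ↦ hT x, fun S hS hne hdir ⟨hpos, hlb⟩ ↦ ?_⟩
  obtain ⟨U, hU, hlub⟩ := exists_mem_saPart_isLUB_vectorFunctional hL (S := -S)
    (fun T hT ↦ by simpa using neg_mem_saPart (hS hT))
    hne.neg
    (fun a ha b hb ↦ by
      obtain ⟨c, hc, hca, hcb⟩ := hdir (-a) ha (-b) hb
      exact ⟨-c, by simpa using hc, by simpa using opleH_neg_neg.2 hca,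
        by simpa using opleH_neg_neg.2 hcb⟩)
    (fun y ↦ ⟨0, by rintro _ ⟨T, hT, rfl⟩; simpa using hpos _ hT y⟩)
  have hUpos : IsPosOpH U := by
    simpa using hlb (-U) (neg_mem_saPart hU) fun T hT ↦ by
      simpa using opleH_neg_neg.2 (opleH_of_forall_isLUB hlub (by simpa using hT : -T ∈ -S))
  refine ⟨by rintro _ ⟨T, hT, rfl⟩; exact hpos T hT x, fun b hb ↦ ?_⟩
  have : vectorFunctional x U ≤ -b := (hlub x).2 <| by
    rintro _ ⟨T, hT, rfl⟩
    exact le_neg.1 (by simpa using hb ⟨-T, hT, rfl⟩)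
  have hU0 : 0 ≤ vectorFunctional x U := hUpos x
  linarith

/-- Let `H` be a complex Hilbert space and `L` a strongly closed complex linear subspace
of `B(H)`. Then the self-adjoint part `L_sa` of `L`, with the order inherited from
`B(H)_sa`, is quasi-perfect: it is normal, and every increasing net in its positive cone
on which every positive linear functional is bounded has a supremum in `L_sa`. -/
theorem saPart_quasiPerfect (L : Submodule ℂ (H →L[ℂ] H))
    (hL : SOTClosed (L : Set (H →L[ℂ] H))) :
    -- normality of `L_sa`
    (∀ T : H →L[ℂ] H, T ∈ saPart (L : Set (H →L[ℂ] H)) →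
      ((∀ φ : (H →L[ℂ] H) →ₗ[ℝ] ℝ,
          PosOrderContFunOn (saPart (L : Set (H →L[ℂ] H))) φ → 0 ≤ φ T)
        ↔ IsPosOpH T)) ∧
    -- every increasing net in the positive cone of `L_sa` on which all positive
    -- functionals are bounded has a supremum in `L_sa`
    ∀ S : Set (H →L[ℂ] H),
      (∀ T ∈ S, T ∈ saPart (L : Set (H →L[ℂ] H)) ∧ IsPosOpH T) →
      S.Nonempty → DirectedOn opleH S →
      (∀ φ : (H →L[ℂ] H) →ₗ[ℝ] ℝ,
        PosFunOn (saPart (L : Set (H →L[ℂ] H))) φ → BddAbove (φ '' S)) →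
      ∃ U ∈ saPart (L : Set (H →L[ℂ] H)),
        (∀ T ∈ S, opleH T U) ∧
        ∀ W ∈ saPart (L : Set (H →L[ℂ] H)),
          (∀ T ∈ S, opleH T W) → opleH U W := by
  refine ⟨fun T hT ↦ ⟨fun h x ↦ h _ (posOrderContFunOn_vectorFunctional hL x),
    fun hT' φ hφ ↦ hφ.1 T hT hT'⟩, fun S hS hne hdir hbdd ↦ ?_⟩
  obtain ⟨U, hU, hlub⟩ := exists_mem_saPart_isLUB_vectorFunctional hL (fun T hT ↦ (hS T hT).1)
    hne hdir fun x ↦ hbdd _ fun T _ hT ↦ hT x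
  exact ⟨U, hU, fun T hT ↦ opleH_of_forall_isLUB hlub hT,
    fun W _ ↦ (opleH_iff_of_forall_isLUB hlub).2⟩
end

section
/- Let X be a locally compact Hausdorff space, E a quasi-perfect partially ordered vector space, and π : C_0(X) → E a positive linear operator. Then the set {π(f) : f ∈ C_c(X), 0 ≤ f ≤ 1} is bounded above in E (indeed has a supremum). -/
open ZeroAtInfty

/-- A quasi-perfect partially ordered vector space: it is normal, and every increasing
net (equivalently: nonempty upward directed set) in the positive cone on which every
positive linear functional is bounded has a supremum. -/
def QuasiPerfect (E : Type*) [AddCommGroup E] [PartialOrder E] [IsOrderedAddMonoid E] [Module ℝ E] : Prop :=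
  IsNormalPOVS E ∧
  ∀ S : Set E, S.Nonempty → (∀ x ∈ S, 0 ≤ x) → DirectedOn (· ≤ ·) S →
    (∀ φ : E →ₗ[ℝ] ℝ, (∀ x : E, 0 ≤ x → 0 ≤ φ x) → BddAbove (φ '' S)) →
    ∃ y : E, IsLUB S y

/-!
Positivity of `π` gives everything except boundedness: the set is nonempty, lies in the
positive cone, and is directed because compactly supported functions with values in `[0, 1]`
are closed under pointwise maximum. For a positive functional `φ` on `E`, `ψ = φ ∘ π` is a
positive functional on `C₀(X, ℝ)`, and such a functional is bounded on the functions with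
values in `[0, 1]`: otherwise pick such `fₙ` with `ψ fₙ > n 2ⁿ`; the series `g = ∑ 2⁻ⁿ fₙ`
converges in the Banach space `C₀(X, ℝ)` and dominates every `2⁻ⁿ fₙ`, so `ψ g > n` for all `n`.
-/

namespace ZeroAtInftyContinuousMap

section Sup

variable {X β : Type*} [TopologicalSpace X] [TopologicalSpace β] [Lattice β] [Zero β]
  [ContinuousSup β]

instance instMax : Max C₀(X, β) where
  max f g :=
    { toFun := fun x => f x ⊔ g x
      continuous_toFun := f.continuous.sup g.continuous
      zero_at_infty' := by simpa using (zero_at_infty f).sup_nhds (zero_at_infty g) }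

theorem hasCompactSupport_sup {f g : C₀(X, β)} (hf : HasCompactSupport f)
    (hg : HasCompactSupport g) : HasCompactSupport ⇑(f ⊔ g) :=
  hf.comp₂_left hg (sup_idem _)

end Sup

variable {X : Type*} [TopologicalSpace X]

theorem hasSum_apply {β ι : Type*} [NormedAddCommGroup β] {F : ι → C₀(X, β)} {g : C₀(X, β)}
    (h : HasSum F g) (x : X) : HasSum (fun i => F i x) (g x) :=
  h.map (⟨⟨fun f : C₀(X, β) => f x, rfl⟩, fun _ _ => rfl⟩ : C₀(X, β) →+ β)
    ((continuous_apply x).comp (BoundedContinuousFunction.continuous_coe.comp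
      isometry_toBCF.continuous))

theorem apply_le_tsum_apply {ι : Type*} {F : ι → C₀(X, ℝ)} (hF : Summable F)
    (hF₀ : ∀ i x, 0 ≤ F i x) (i : ι) (x : X) : F i x ≤ (∑' i, F i) x :=
  le_hasSum (hasSum_apply hF.hasSum x) i fun j _ => hF₀ j x

theorem norm_le_one_of_forall_mem_Icc {f : C₀(X, ℝ)} (hf : ∀ x, 0 ≤ f x ∧ f x ≤ 1) :
    ‖f‖ ≤ 1 := by
  rw [← norm_toBCF_eq_norm]
  refine (BoundedContinuousFunction.norm_le zero_le_one).mpr fun x => ?_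
  change ‖f x‖ ≤ 1
  rw [Real.norm_eq_abs, abs_le]
  exact ⟨by linarith [(hf x).1], (hf x).2⟩

theorem map_le_map_of_forall_le {E : Type*} [AddCommGroup E] [PartialOrder E]
    [IsOrderedAddMonoid E] [Module ℝ E] {T : C₀(X, ℝ) →ₗ[ℝ] E}
    (hT : ∀ f : C₀(X, ℝ), (∀ x, 0 ≤ f x) → 0 ≤ T f) {f g : C₀(X, ℝ)} (h : ∀ x, f x ≤ g x) :
    T f ≤ T g := by
  have := hT (g - f) fun x => sub_nonneg.mpr (h x)
  rwa [map_sub, sub_nonneg] at this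

theorem bddAbove_image_of_forall_mem_Icc {ψ : C₀(X, ℝ) →ₗ[ℝ] ℝ}
    (hψ : ∀ f : C₀(X, ℝ), (∀ x, 0 ≤ f x) → 0 ≤ ψ f) :
    BddAbove (ψ '' {f | ∀ x, 0 ≤ f x ∧ f x ≤ 1}) := by
  by_contra hb
  have hex (n : ℕ) : ∃ f : C₀(X, ℝ), (∀ x, 0 ≤ f x ∧ f x ≤ 1) ∧ 2 ^ n * n < ψ f := by
    obtain ⟨_, ⟨f, hf, rfl⟩, hlt⟩ := not_bddAbove_iff.mp hb (2 ^ n * n)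
    exact ⟨f, hf, hlt⟩
  choose F hF hψF using hex
  have hsum : Summable fun n => (2⁻¹ : ℝ) ^ n • F n := by
    refine Summable.of_norm_bounded (summable_geometric_of_lt_one (by norm_num) two_inv_lt_one)
      fun n => ?_
    rw [norm_smul, norm_pow, norm_inv, Real.norm_two]
    exact mul_le_of_le_one_right (by positivity) (norm_le_one_of_forall_mem_Icc (hF n))
  obtain ⟨n, hn⟩ := exists_nat_ge (ψ (∑' n, (2⁻¹ : ℝ) ^ n • F n))
  have hle : ψ ((2⁻¹ : ℝ) ^ n • F n) ≤ ψ (∑' n, (2⁻¹ : ℝ) ^ n • F n) :=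
    map_le_map_of_forall_le hψ <| apply_le_tsum_apply hsum
      (fun m x => smul_nonneg (pow_nonneg (by norm_num : (0 : ℝ) ≤ 2⁻¹) m) (hF m x).1) n
  have hlt : (n : ℝ) < ψ ((2⁻¹ : ℝ) ^ n • F n) := by
    rw [map_smul, smul_eq_mul]
    calc (n : ℝ) = ((2⁻¹ : ℝ) * 2) ^ n * n := by norm_num
      _ = (2⁻¹ : ℝ) ^ n * (2 ^ n * n) := by rw [mul_pow, mul_assoc]
      _ < (2⁻¹ : ℝ) ^ n * ψ (F n) := mul_lt_mul_of_pos_left (hψF n) (by positivity)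
  linarith

end ZeroAtInftyContinuousMap

theorem quasiPerfect_bddAbove_general
    {X : Type*} [TopologicalSpace X]
    {E : Type*} [AddCommGroup E] [PartialOrder E] [IsOrderedAddMonoid E] [Module ℝ E]
    (hqp : QuasiPerfect E)
    (π : C₀(X, ℝ) →ₗ[ℝ] E) (hπ : ∀ f : C₀(X, ℝ), (∀ x, 0 ≤ f x) → 0 ≤ π f) :
    ∃ y : E, IsLUB {z : E | ∃ f : C₀(X, ℝ), HasCompactSupport ⇑f ∧
      (∀ x, 0 ≤ f x ∧ f x ≤ 1) ∧ z = π f} y := by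
  refine hqp.2 _ ⟨π 0, 0, HasCompactSupport.zero, fun _ => ⟨le_rfl, zero_le_one⟩, rfl⟩ ?_ ?_ ?_
  · rintro _ ⟨f, -, hf, rfl⟩
    exact hπ f fun x => (hf x).1
  · rintro _ ⟨f, hfc, hf, rfl⟩ _ ⟨g, hgc, hg, rfl⟩
    refine ⟨π (f ⊔ g),
      ⟨f ⊔ g, ZeroAtInftyContinuousMap.hasCompactSupport_sup hfc hgc, fun x => ?_, rfl⟩,
      ZeroAtInftyContinuousMap.map_le_map_of_forall_le hπ fun x => le_sup_left,
      ZeroAtInftyContinuousMap.map_le_map_of_forall_le hπ fun x => le_sup_right⟩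
    exact ⟨le_sup_of_le_left (hf x).1, sup_le (hf x).2 (hg x).2⟩
  · intro φ hφ
    obtain ⟨C, hC⟩ := ZeroAtInftyContinuousMap.bddAbove_image_of_forall_mem_Icc (ψ := φ ∘ₗ π)
      fun f hf => hφ _ (hπ f hf)
    refine ⟨C, ?_⟩
    rintro _ ⟨_, ⟨f, -, hf, rfl⟩, rfl⟩
    exact hC ⟨f, hf, rfl⟩

/-- Let `X` be a locally compact Hausdorff space, `E` a quasi-perfect partially ordered
vector space, and `π : C₀(X) → E` a positive linear operator. Then the set
`{π f : f ∈ C_c(X), 0 ≤ f ≤ 1}` has a supremum in `E` (in particular it is bounded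
above). -/
theorem quasiPerfect_bddAbove
    {X : Type*} [TopologicalSpace X] [MeasurableSpace X] [BorelSpace X]
    [LocallyCompactSpace X] [T2Space X]
    {E : Type*} [AddCommGroup E] [PartialOrder E] [IsOrderedAddMonoid E] [Module ℝ E] [PosSMulStrictMono ℝ E]
    (hqp : QuasiPerfect E)
    (π : C₀(X, ℝ) →ₗ[ℝ] E) (hπ : ∀ f : C₀(X, ℝ), (∀ x, 0 ≤ f x) → 0 ≤ π f) :
    ∃ y : E, IsLUB {z : E | ∃ f : C₀(X, ℝ), HasCompactSupport ⇑f ∧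
      (∀ x, 0 ≤ f x ∧ f x ≤ 1) ∧ z = π f} y :=
  quasiPerfect_bddAbove_general hqp π hπ
end

section
/- Let X be a locally compact Hausdorff space, E a monotone complete and normal partially ordered vector space, and π : C_c(X) → E a positive linear operator. Suppose μ and μ′ are two regular Borel measures with values in the extended positive cone of E, each representing π via the order integral on C_c(X). Then μ = μ′. -/
/-!
For `K` compact inside `V` open, Urysohn's lemma gives `g ∈ C_c(X)` with `𝟙_K ≤ g ≤ 𝟙_V`, so
`μ K ≤ π g ≤ μ' V`. The first inequality holds because `𝟙_K` is an elementary function below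
`g` with integral `μ K`; the second because every positive elementary function below `𝟙_V` has integral
at most `μ' V`, which is seen by splitting its sets into the cells of their Venn diagram, on each
of which the function is constant. Outer regularity at `K` turns this into `μ K ≤ μ' K`, and by
symmetry `μ = μ'` on compact sets. Inner regularity carries the equality to open sets, and outer
regularity to all Borel sets.
-/

open Set CompactlySupported

section Measures

variable {X : Type*} [TopologicalSpace X] [MeasurableSpace X] [BorelSpace X]
variable {E : Type*} [AddCommGroup E] [PartialOrder E] [IsOrderedAddMonoid E]

def IsRegularBorel (μ : Set X → WithTop E) : Prop :=
  (∀ K : Set X, IsCompact K → μ K ≠ ⊤) ∧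
  (∀ V : Set X, IsOpen V → InnerRegularAt μ V) ∧
  (∀ Δ : Set X, MeasurableSet Δ → OuterRegularAt μ Δ)

variable [Module ℝ E]

/-- Scalar multiplication on `WithTop E`: `0 • ∞ = 0` and `r • ∞ = ∞` for `r ≠ 0`. -/
noncomputable def tsmul (r : ℝ) (y : WithTop E) : WithTop E :=
  if r = 0 then 0 else WithTop.map (fun x : E => r • x) y

/-- Integrals of positive elementary functions below `f`; the order integral of `f ≥ 0`
is the least upper bound of this set. -/
def elemBelow (μ : Set X → WithTop E) (f : X → ℝ) : Set (WithTop E) :=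
  {y : WithTop E | ∃ (n : ℕ) (r : Fin n → ℝ) (Δ : Fin n → Set X),
    (∀ i, 0 ≤ r i) ∧ (∀ i, MeasurableSet (Δ i)) ∧
    (∀ x : X, (∑ i, Set.indicator (Δ i) (fun _ => r i) x) ≤ f x) ∧
    y = ∑ i, tsmul (r i) (μ (Δ i))}

end Measures

section VennCells

variable {X ι : Type*}

def vennCell (Δ : ι → Set X) (S : Finset ι) : Set X :=
  {x | ∀ i, x ∈ Δ i ↔ i ∈ S}

theorem pairwise_disjoint_vennCell (Δ : ι → Set X) :
    Pairwise (Function.onFun Disjoint (vennCell Δ)) := by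
  refine fun S T hST => Set.disjoint_left.mpr fun x hxS hxT => hST ?_
  ext i
  rw [← hxS i, ← hxT i]

theorem iUnion_vennCell [Fintype ι] (Δ : ι → Set X) : ⋃ S, vennCell Δ S = univ := by
  classical
  exact eq_univ_of_forall fun x =>
    mem_iUnion.mpr ⟨Finset.univ.filter (x ∈ Δ ·), fun i => by simp⟩

theorem vennCell_inter [DecidableEq ι] (Δ : ι → Set X) (S : Finset ι) (i : ι) :
    vennCell Δ S ∩ Δ i = if i ∈ S then vennCell Δ S else ∅ := by
  split_ifs with hi
  · exact inter_eq_left.mpr fun x hx => (hx i).mpr hi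
  · exact disjoint_iff_inter_eq_empty.mp (disjoint_left.mpr fun x hx hxi => hi ((hx i).mp hxi))

theorem measurableSet_vennCell [MeasurableSpace X] {Δ : ι → Set X}
    (hΔ : ∀ i, MeasurableSet (Δ i)) [Finite ι] (S : Finset ι) :
    MeasurableSet (vennCell Δ S) := by
  rw [vennCell, ofPred_forall]
  refine MeasurableSet.iInter fun i => ?_
  by_cases hi : i ∈ S
  · convert hΔ i using 1
    simp [hi]
  · convert (hΔ i).compl using 1
    ext
    simp [hi]

theorem sum_indicator_of_mem_vennCell [Fintype ι] {Δ : ι → Set X} {S : Finset ι}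
    {x : X} (hx : x ∈ vennCell Δ S) (r : ι → ℝ) :
    ∑ i, (Δ i).indicator (fun _ => r i) x = ∑ i ∈ S, r i := by
  classical
  rw [← Finset.sum_ite_mem_eq S]
  refine Finset.sum_congr rfl fun i _ => ?_
  by_cases hi : i ∈ S
  · rw [if_pos hi, indicator_of_mem ((hx i).mpr hi)]
  · rw [if_neg hi, indicator_of_notMem fun h => hi ((hx i).mp h)]

end VennCells

namespace IsPosMeasure

variable {X : Type*} [MeasurableSpace X]
variable {E : Type*} [AddCommGroup E] [PartialOrder E] [IsOrderedAddMonoid E]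
variable {μ : Set X → WithTop E}

theorem iUnion_fin (hμ : IsPosMeasure μ) {n : ℕ} {B : Fin n → Set X}
    (hB : ∀ i, MeasurableSet (B i)) (hd : Pairwise (Function.onFun Disjoint B)) :
    μ (⋃ i, B i) = ∑ i, μ (B i) := by
  set Δ : ℕ → Set X := fun k => if h : k < n then B ⟨k, h⟩ else ∅
  have hΔ : ∀ k, MeasurableSet (Δ k) := fun k => by
    by_cases h : k < n <;> simp [Δ, h, hB]
  have hdΔ : Pairwise (Function.onFun Disjoint Δ) := fun k l hkl => by
    by_cases hk : k < n
    · by_cases hl : l < n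
      · simpa [Function.onFun, Δ, hk, hl] using
          hd (by simpa using hkl : (⟨k, hk⟩ : Fin n) ≠ ⟨l, hl⟩)
      · simp [Function.onFun, Δ, hl]
    · simp [Function.onFun, Δ, hk]
  have hunion : ⋃ k, Δ k = ⋃ i, B i := by
    ext x
    simp only [Δ, mem_iUnion]
    constructor
    · rintro ⟨k, hk⟩
      by_cases h : k < n
      · exact ⟨⟨k, h⟩, by simpa [h] using hk⟩
      · simp [h] at hk
    · rintro ⟨i, hi⟩
      exact ⟨i, by simpa [i.isLt] using hi⟩
  have hgreatest : IsGreatest {y | ∃ N : ℕ, y = ∑ k ∈ Finset.range N, μ (Δ k)}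
      (∑ k ∈ Finset.range n, μ (Δ k)) := by
    refine ⟨⟨n, rfl⟩, ?_⟩
    rintro y ⟨N, rfl⟩
    rcases le_total N n with hN | hN
    · exact Finset.sum_le_sum_of_subset_of_nonneg (Finset.range_subset_range.mpr hN)
        fun k _ _ => hμ.2.1 _ (hΔ k)
    · refine (Finset.sum_subset (Finset.range_subset_range.mpr hN) fun k _ hk => ?_).ge
      simp only [Finset.mem_range, not_lt] at hk
      simp [Δ, not_lt.mpr hk, hμ.1]
  rw [← hunion, (hμ.2.2 Δ hΔ hdΔ).unique hgreatest.isLUB, ← Fin.sum_univ_eq_sum_range]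
  simp [Δ]

theorem iUnion_fintype (hμ : IsPosMeasure μ) {ι : Type*} [Fintype ι] {B : ι → Set X}
    (hB : ∀ i, MeasurableSet (B i)) (hd : Pairwise (Function.onFun Disjoint B)) :
    μ (⋃ i, B i) = ∑ i, μ (B i) := by
  let e := Fintype.equivFin ι
  have h := hμ.iUnion_fin (B := fun i => B (e.symm i)) (fun i => hB _)
    fun i j hij => hd (e.symm.injective.ne hij)
  rwa [e.symm.surjective.iUnion_comp B,
    Fintype.sum_equiv e.symm _ (fun i => μ (B i)) fun _ => rfl] at h

theorem eq_sum_vennCell (hμ : IsPosMeasure μ) {ι : Type*} [Fintype ι]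
    {Δ : ι → Set X} (hΔ : ∀ i, MeasurableSet (Δ i)) {D : Set X} (hD : MeasurableSet D) :
    μ D = ∑ S, μ (vennCell Δ S ∩ D) := by
  rw [← hμ.iUnion_fintype (fun S => (measurableSet_vennCell hΔ S).inter hD)
    fun S T hST => (pairwise_disjoint_vennCell Δ hST).mono inter_subset_left inter_subset_left,
    ← iUnion_inter, iUnion_vennCell, univ_inter]

end IsPosMeasure

section ScalarAction

variable {E : Type*} [AddCommGroup E] [Module ℝ E]

theorem tsmul_zero_left (y : WithTop E) : tsmul 0 y = 0 := if_pos rfl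

theorem tsmul_coe (r : ℝ) (a : E) : tsmul r (a : WithTop E) = ↑(r • a) := by
  by_cases hr : r = 0 <;> simp [tsmul, hr]

theorem tsmul_one (y : WithTop E) : tsmul 1 y = y := by
  induction y using WithTop.recTopCoe with
  | top => simp [tsmul]
  | coe a => rw [tsmul_coe, one_smul]

theorem tsmul_zero_right (r : ℝ) : tsmul r (0 : WithTop E) = 0 := by
  rw [← WithTop.coe_zero, tsmul_coe, smul_zero]

theorem tsmul_add (r : ℝ) (y z : WithTop E) : tsmul r (y + z) = tsmul r y + tsmul r z := by
  by_cases hr : r = 0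
  · simp [tsmul, hr]
  · simp only [tsmul, if_neg hr]
    exact WithTop.map_add (DistribSMul.toAddMonoidHom E r) y z

theorem tsmul_sum {ι : Type*} (r : ℝ) (s : Finset ι) (f : ι → WithTop E) :
    tsmul r (∑ i ∈ s, f i) = ∑ i ∈ s, tsmul r (f i) :=
  map_sum (⟨⟨tsmul r, tsmul_zero_right r⟩, tsmul_add r⟩ : WithTop E →+ WithTop E) f s

theorem sum_tsmul_le_self [PartialOrder E] [IsOrderedAddMonoid E] [PosSMulMono ℝ E]
    {ι : Type*} {s : Finset ι} {r : ι → ℝ} (hs : ∑ i ∈ s, r i ≤ 1) {y : WithTop E}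
    (hy : 0 ≤ y) : ∑ i ∈ s, tsmul (r i) y ≤ y := by
  induction y using WithTop.recTopCoe with
  | top => exact le_top
  | coe a =>
    simp only [tsmul_coe, ← WithTop.coe_sum, ← Finset.sum_smul, WithTop.coe_le_coe]
    exact smul_le_of_le_one_left (WithTop.coe_nonneg.mp hy) hs

end ScalarAction

section OrderIntegral

variable {X : Type*} [MeasurableSpace X] {E : Type*} [AddCommGroup E] [Module ℝ E]

theorem elemBelow_mono (μ : Set X → WithTop E) {f g : X → ℝ} (hfg : f ≤ g) :
    elemBelow μ f ⊆ elemBelow μ g := by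
  rintro y ⟨n, r, Δ, hr, hΔ, hle, rfl⟩
  exact ⟨n, r, Δ, hr, hΔ, fun x => (hle x).trans (hfg x), rfl⟩

theorem mem_elemBelow_indicator (μ : Set X → WithTop E) {K : Set X} (hK : MeasurableSet K) :
    μ K ∈ elemBelow μ (K.indicator 1) :=
  ⟨1, fun _ => 1, fun _ => K, fun _ => zero_le_one, fun _ => hK,
    fun x => by simp [Pi.one_def], by simp [tsmul_one]⟩

namespace IsPosMeasure

variable [PartialOrder E] [IsOrderedAddMonoid E] [PosSMulMono ℝ E] {μ : Set X → WithTop E}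

theorem sum_tsmul_vennCell_inter_le (hμ : IsPosMeasure μ) {ι : Type*} [Fintype ι]
    {r : ι → ℝ} (hr : ∀ i, 0 ≤ r i) {Δ : ι → Set X} (hΔ : ∀ i, MeasurableSet (Δ i))
    {V : Set X} (hV : MeasurableSet V)
    (hle : ∀ x, ∑ i, (Δ i).indicator (fun _ => r i) x ≤ V.indicator 1 x) (S : Finset ι) :
    ∑ i, tsmul (r i) (μ (vennCell Δ S ∩ Δ i)) ≤ μ (vennCell Δ S ∩ V) := by
  classical
  have hcell : MeasurableSet (vennCell Δ S) := measurableSet_vennCell hΔ S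
  have hsum : ∑ i, tsmul (r i) (μ (vennCell Δ S ∩ Δ i))
      = ∑ i ∈ S, tsmul (r i) (μ (vennCell Δ S)) := by
    rw [← Finset.sum_ite_mem_eq S]
    refine Finset.sum_congr rfl fun i _ => ?_
    rw [vennCell_inter]
    split_ifs
    · rfl
    · rw [hμ.1, tsmul_zero_right]
  rw [hsum]
  by_cases hsub : vennCell Δ S ⊆ V
  · rw [inter_eq_left.mpr hsub]
    rcases (vennCell Δ S).eq_empty_or_nonempty with hempty | ⟨x, hx⟩
    · simp [hempty, hμ.1, tsmul_zero_right]
    · refine sum_tsmul_le_self ?_ (hμ.2.1 _ hcell)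
      simpa [sum_indicator_of_mem_vennCell hx, hsub hx] using hle x
  · obtain ⟨x, hx, hxV⟩ := not_subset.mp hsub
    have hS : ∑ i ∈ S, r i ≤ 0 := by
      simpa [sum_indicator_of_mem_vennCell hx, hxV] using hle x
    have hzero : ∀ i ∈ S, r i = 0 :=
      (Finset.sum_eq_zero_iff_of_nonneg fun i _ => hr i).mp
        (hS.antisymm (Finset.sum_nonneg fun i _ => hr i))
    rw [Finset.sum_congr rfl fun i hi => by rw [hzero i hi, tsmul_zero_left],
      Finset.sum_const_zero]
    exact hμ.2.1 _ (hcell.inter hV)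

theorem mem_upperBounds_elemBelow_indicator (hμ : IsPosMeasure μ) {V : Set X}
    (hV : MeasurableSet V) : μ V ∈ upperBounds (elemBelow μ (V.indicator 1)) := by
  rintro y ⟨n, r, Δ, hr, hΔ, hle, rfl⟩
  calc ∑ i, tsmul (r i) (μ (Δ i))
      = ∑ S, ∑ i, tsmul (r i) (μ (vennCell Δ S ∩ Δ i)) := by
        rw [Finset.sum_comm]
        refine Finset.sum_congr rfl fun i _ => ?_
        rw [hμ.eq_sum_vennCell hΔ (hΔ i), tsmul_sum]
    _ ≤ ∑ S, μ (vennCell Δ S ∩ V) :=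
        Finset.sum_le_sum fun S _ => hμ.sum_tsmul_vennCell_inter_le hr hΔ hV hle S
    _ = μ V := (hμ.eq_sum_vennCell hΔ hV).symm

end IsPosMeasure

end OrderIntegral

section Regularity

variable {X : Type*} [TopologicalSpace X] {E : Type*} [PartialOrder E] {μ ν : Set X → WithTop E}

theorem InnerRegularAt.eq_of_forall_isCompact {V : Set X}
    (hμ : InnerRegularAt μ V) (hν : InnerRegularAt ν V)
    (h : ∀ K, IsCompact K → K ⊆ V → μ K = ν K) : μ V = ν V := by
  have hsets : {y | ∃ K, IsCompact K ∧ K ⊆ V ∧ y = μ K}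
      = {y | ∃ K, IsCompact K ∧ K ⊆ V ∧ y = ν K} := by
    ext y
    constructor <;> rintro ⟨K, hK, hKV, rfl⟩
    exacts [⟨K, hK, hKV, h K hK hKV⟩, ⟨K, hK, hKV, (h K hK hKV).symm⟩]
  exact (hsets ▸ hμ : IsLUB _ (μ V)).unique hν

theorem OuterRegularAt.eq_of_forall_isOpen {Δ : Set X}
    (hμ : OuterRegularAt μ Δ) (hν : OuterRegularAt ν Δ)
    (h : ∀ V, IsOpen V → Δ ⊆ V → μ V = ν V) : μ Δ = ν Δ := by
  have hsets : {y | ∃ V, IsOpen V ∧ Δ ⊆ V ∧ y = μ V}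
      = {y | ∃ V, IsOpen V ∧ Δ ⊆ V ∧ y = ν V} := by
    ext y
    constructor <;> rintro ⟨V, hV, hΔV, rfl⟩
    exacts [⟨V, hV, hΔV, h V hV hΔV⟩, ⟨V, hV, hΔV, (h V hV hΔV).symm⟩]
  exact (hsets ▸ hμ : IsGLB _ (μ Δ)).unique hν

theorem IsRegularBorel.eq_of_forall_isCompact [MeasurableSpace X] (hμ : IsRegularBorel μ)
    (hν : IsRegularBorel ν) (h : ∀ K, IsCompact K → μ K = ν K) {Δ : Set X}
    (hΔ : MeasurableSet Δ) : μ Δ = ν Δ :=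
  (hμ.2.2 Δ hΔ).eq_of_forall_isOpen (hν.2.2 Δ hΔ) fun V hV _ =>
    (hμ.2.1 V hV).eq_of_forall_isCompact (hν.2.1 V hV) fun K hK _ => h K hK

end Regularity

section Representation

variable {X : Type*} [TopologicalSpace X] [MeasurableSpace X]
variable {E : Type*} [AddCommGroup E] [PartialOrder E] [IsOrderedAddMonoid E] [Module ℝ E]

def Represents (μ : Set X → WithTop E) (I : C_c(X, ℝ) → WithTop E) : Prop :=
  ∀ f : C_c(X, ℝ), (∀ x, 0 ≤ f x) → IsLUB (elemBelow μ (fun x => f x)) (I f)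

variable [BorelSpace X] [LocallyCompactSpace X] [T2Space X] [PosSMulMono ℝ E]
  {μ ν : Set X → WithTop E} {I : C_c(X, ℝ) → WithTop E}

theorem Represents.le_of_isCompact_subset_isOpen (hμ : Represents μ I) (hν : Represents ν I)
    (hνpos : IsPosMeasure ν) {K V : Set X} (hK : IsCompact K) (hV : IsOpen V) (hKV : K ⊆ V) :
    μ K ≤ ν V := by
  obtain ⟨f, hfK, hfV, hfc, hf01⟩ := exists_continuous_one_zero_of_isCompact hK
    hV.isClosed_compl (disjoint_compl_right_iff_subset.mpr hKV)
  let g : C_c(X, ℝ) := ⟨f, hfc⟩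
  have hg0 : ∀ x, 0 ≤ g x := fun x => (hf01 x).1
  have hKg : K.indicator 1 ≤ fun x => g x := fun x => by
    by_cases hx : x ∈ K
    · simp [hx, g, hfK hx]
    · simp [hx, hg0 x]
  have hgV : (fun x => g x) ≤ V.indicator 1 := fun x => by
    by_cases hx : x ∈ V
    · rw [indicator_of_mem hx]
      exact (hf01 x).2
    · simp [hx, g, hfV hx]
  calc μ K ≤ I g :=
        (hμ g hg0).1 (elemBelow_mono μ hKg (mem_elemBelow_indicator μ hK.measurableSet))
    _ ≤ ν V := (hν g hg0).2 fun y hy =>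
      hνpos.mem_upperBounds_elemBelow_indicator hV.measurableSet (elemBelow_mono ν hgV hy)

theorem Represents.eq_of_isCompact (hμ : Represents μ I) (hν : Represents ν I)
    (hμpos : IsPosMeasure μ) (hνpos : IsPosMeasure ν) (hμreg : IsRegularBorel μ)
    (hνreg : IsRegularBorel ν) {K : Set X} (hK : IsCompact K) : μ K = ν K := by
  refine le_antisymm ((hνreg.2.2 K hK.measurableSet).2 ?_) ((hμreg.2.2 K hK.measurableSet).2 ?_)
  · rintro _ ⟨V, hV, hKV, rfl⟩
    exact hμ.le_of_isCompact_subset_isOpen hν hνpos hK hV hKV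
  · rintro _ ⟨V, hV, hKV, rfl⟩
    exact hν.le_of_isCompact_subset_isOpen hμ hμpos hK hV hKV

end Representation

theorem representing_regular_measure_unique_general
    {X : Type*} [TopologicalSpace X] [MeasurableSpace X] [BorelSpace X]
    [LocallyCompactSpace X] [T2Space X]
    {E : Type*} [AddCommGroup E] [PartialOrder E] [IsOrderedAddMonoid E] [Module ℝ E] [PosSMulStrictMono ℝ E]
    (π : C_c(X, ℝ) →ₗ[ℝ] E)
    (μ μ' : Set X → WithTop E)
    (hμ : IsPosMeasure μ) (hμreg : IsRegularBorel μ)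
    (hμ' : IsPosMeasure μ') (hμ'reg : IsRegularBorel μ')
    (hrep : ∀ f : C_c(X, ℝ), (∀ x, 0 ≤ f x) →
      IsLUB (elemBelow μ (fun x => f x)) ((π f : E) : WithTop E))
    (hrep' : ∀ f : C_c(X, ℝ), (∀ x, 0 ≤ f x) →
      IsLUB (elemBelow μ' (fun x => f x)) ((π f : E) : WithTop E)) :
    ∀ Δ : Set X, MeasurableSet Δ → μ Δ = μ' Δ := by
  have hcompact : ∀ K, IsCompact K → μ K = μ' K := fun _ hK =>
    Represents.eq_of_isCompact (I := fun f => (π f : WithTop E)) hrep hrep' hμ hμ' hμreg hμ'reg hK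
  exact fun _ hΔ => hμreg.eq_of_forall_isCompact hμ'reg hcompact hΔ

/-- Uniqueness of the representing regular Borel measure: if `X` is a locally compact
Hausdorff space, `E` a monotone complete and normal partially ordered vector space,
`π : C_c(X) → E` a positive linear operator, and `μ`, `μ'` are regular Borel measures
with values in the extended positive cone of `E` both representing `π` via the order
integral, then `μ = μ'` on the Borel σ-algebra. -/
theorem representing_regular_measure_unique
    {X : Type*} [TopologicalSpace X] [MeasurableSpace X] [BorelSpace X]
    [LocallyCompactSpace X] [T2Space X]
    {E : Type*} [AddCommGroup E] [PartialOrder E] [IsOrderedAddMonoid E] [Module ℝ E] [PosSMulStrictMono ℝ E] [PosSMulReflectLT ℝ E]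
    (hmc : MonotoneComplete E) (hnormal : IsNormalPOVS E)
    (π : C_c(X, ℝ) →ₗ[ℝ] E) (hπ : ∀ f : C_c(X, ℝ), (∀ x, 0 ≤ f x) → 0 ≤ π f)
    (μ μ' : Set X → WithTop E)
    (hμ : IsPosMeasure μ) (hμreg : IsRegularBorel μ)
    (hμ' : IsPosMeasure μ') (hμ'reg : IsRegularBorel μ')
    (hrep : ∀ f : C_c(X, ℝ), (∀ x, 0 ≤ f x) →
      IsLUB (elemBelow μ (fun x => f x)) ((π f : E) : WithTop E))
    (hrep' : ∀ f : C_c(X, ℝ), (∀ x, 0 ≤ f x) →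
      IsLUB (elemBelow μ' (fun x => f x)) ((π f : E) : WithTop E)) :
    ∀ Δ : Set X, MeasurableSet Δ → μ Δ = μ' Δ :=
  representing_regular_measure_unique_general π μ μ' hμ hμreg hμ' hμ'reg hrep hrep'
end
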